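/- arXiv:1903.03130 — 8 statements merged into one kernel-verified Lean document; each statement's English description precedes it below -/
import Mathlib

section
/- Let a < b be real numbers and let g : ℝ → ℝ be continuous on [a,b]. Then the function u_g satisfies the homogeneous Dirichlet boundary conditions u_g(a) = 0 and u_g(b) = 0, and for every x in the open interval (a,b), u_g is twice differentiable at x with second derivative u_g''(x) = −g(x). (That is, u_g = −Δ^{-1} g, the solution of the boundary value problem −y'' = g, y(a) = y(b) = 0.) -/
open intervalIntegral

/-- `u a b f` is `-Δ⁻¹ f`: the solution of `-y'' = f`, `y a = 0`, `y b = 0`,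
given by the explicit double-integral formula of the paper. -/
noncomputable def uFun (a b : ℝ) (f : ℝ → ℝ) (x : ℝ) : ℝ :=
  (∫ η in x..b, ∫ ξ in a..η, f ξ) -
    ((b - x) / (b - a)) * ∫ η in a..b, ∫ ξ in a..η, f ξ

theorem stmt_0 (a b : ℝ) (hab : a < b) (g : ℝ → ℝ)
    (hg : ContinuousOn g (Set.Icc a b)) :
    uFun a b g a = 0 ∧ uFun a b g b = 0 ∧
      ∀ x ∈ Set.Ioo a b,
        DifferentiableAt ℝ (uFun a b g) x ∧
          HasDerivAt (deriv (uFun a b g)) (-(g x)) x := by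
  have hba : b - a ≠ 0 := sub_ne_zero.mpr hab.ne'
  set F : ℝ → ℝ := fun η => ∫ ξ in a..η, g ξ with hFdef
  set C : ℝ := ∫ η in a..b, F η with hCdef
  have huIcc : Set.uIcc a b = Set.Icc a b := Set.uIcc_of_le hab.le
  have hgIntOn : MeasureTheory.IntegrableOn g (Set.uIcc a b) := by
    rw [huIcc]
    exact hg.integrableOn_Icc
  have hFcont : ContinuousOn F (Set.Icc a b) := by
    have := intervalIntegral.continuousOn_primitive_interval (μ := MeasureTheory.volume) hgIntOn
    rwa [huIcc] at this
  -- boundary values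
  have hua : uFun a b g a = 0 := by
    simp [uFun, div_self hba]
  have hub : uFun a b g b = 0 := by
    simp [uFun]
  refine ⟨hua, hub, fun x hx => ?_⟩
  -- derivative of F at points of Ioo
  have hFInt : ∀ y ∈ Set.Ioo a b, IntervalIntegrable F MeasureTheory.volume y b := by
    intro y hy
    apply (hFcont.mono ?_).intervalIntegrable
    rw [Set.uIcc_of_le hy.2.le]
    exact Set.Icc_subset_Icc hy.1.le le_rfl
  have hFmeas : ∀ y ∈ Set.Ioo a b, StronglyMeasurableAtFilter F (nhds y) MeasureTheory.volume :=
    ContinuousOn.stronglyMeasurableAtFilter isOpen_Ioo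
      (hFcont.mono Set.Ioo_subset_Icc_self)
  have hFcontAt : ∀ y ∈ Set.Ioo a b, ContinuousAt F y := fun y hy =>
    (hFcont.continuousAt (Icc_mem_nhds hy.1 hy.2))
  -- u has derivative -F y + C/(b-a) at every y ∈ Ioo
  have hu' : ∀ y ∈ Set.Ioo a b, HasDerivAt (uFun a b g) (-F y + C / (b - a)) y := by
    intro y hy
    have h1 : HasDerivAt (fun x => ∫ η in x..b, F η) (-F y) y :=
      intervalIntegral.integral_hasDerivAt_left (hFInt y hy) (hFmeas y hy) (hFcontAt y hy)
    have h2 : HasDerivAt (fun x => ((b - x) / (b - a)) * C) (-(C / (b - a))) y := by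
      have : HasDerivAt (fun x : ℝ => ((b - x) / (b - a)) * C) ((-1 / (b - a)) * C) y := by
        have hb : HasDerivAt (fun x : ℝ => (b - x) / (b - a)) (-1 / (b - a)) y :=
          (((hasDerivAt_id y).const_sub b).div_const (b - a))
        exact hb.mul_const C
      convert this using 1
      field_simp
    have := h1.sub h2
    simp only [sub_neg_eq_add] at this
    exact this
  -- deriv u agrees with v := fun y => -F y + C/(b-a) on Ioo
  have hderiv_eq : Set.EqOn (deriv (uFun a b g)) (fun y => -F y + C / (b - a)) (Set.Ioo a b) :=
    fun y hy => (hu' y hy).deriv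
  have hgIntax : IntervalIntegrable g MeasureTheory.volume a x := by
    apply (hg.mono ?_).intervalIntegrable
    rw [Set.uIcc_of_le hx.1.le]
    exact Set.Icc_subset_Icc le_rfl hx.2.le
  have hgmeas : StronglyMeasurableAtFilter g (nhds x) MeasureTheory.volume :=
    ContinuousOn.stronglyMeasurableAtFilter isOpen_Ioo
      (hg.mono Set.Ioo_subset_Icc_self) x hx
  have hgcontAt : ContinuousAt g x := hg.continuousAt (Icc_mem_nhds hx.1 hx.2)
  have hF' : HasDerivAt F (g x) x :=
    intervalIntegral.integral_hasDerivAt_right hgIntax hgmeas hgcontAt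
  have hv : HasDerivAt (fun y => -F y + C / (b - a)) (-(g x)) x := by
    simpa using (hF'.neg.add_const (C / (b - a)))
  refine ⟨(hu' x hx).differentiableAt, ?_⟩
  apply hv.congr_of_eventuallyEq
  filter_upwards [isOpen_Ioo.mem_nhds hx] with y hy
  exact hderiv_eq hy
end

section
/- (Poincaré inequality with optimal constant λ₁ = π²/(b−a)², used as the positivity of −Δ on H²₀[a,b].) Let a < b be real numbers and let f : ℝ → ℝ be continuous on [a,b] and differentiable on [a,b] with continuous derivative f', and suppose f(a) = 0 and f(b) = 0. Then (π²/(b−a)²) · ∫_a^b f(x)² dx ≤ ∫_a^b f'(x)² dx. -/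
open intervalIntegral
set_option maxHeartbeats 1000000

lemma cot_bound_aux (t : ℝ) (h1 : 0 < t) (h2 : t < Real.pi/2) :
    Real.cos t / Real.sin t ≤ 1/t := by
  have hc : 0 < Real.cos t := Real.cos_pos_of_mem_Ioo ⟨by linarith [Real.pi_pos], h2⟩
  have hs : 0 < Real.sin t := Real.sin_pos_of_pos_of_lt_pi h1 (by linarith [Real.pi_pos])
  have ht := Real.lt_tan h1 h2
  rw [Real.tan_eq_sin_div_cos, lt_div_iff₀ hc] at ht
  rw [div_le_div_iff₀ hs h1]
  nlinarith

lemma hasDerivAt_Phi_aux (c a : ℝ) (f f' : ℝ → ℝ) (x : ℝ) (hfx : HasDerivAt f (f' x) x)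
    (hsx : Real.sin (c*(x-a)) ≠ 0) :
    HasDerivAt (fun y => c * (f y ^ 2 * (Real.cos (c*(y-a)) / Real.sin (c*(y-a)))))
      (f' x ^ 2 - c^2 * f x ^ 2
        - (f' x - c * f x * (Real.cos (c*(x-a)) / Real.sin (c*(x-a))))^2) x := by
  have h1 : HasDerivAt (fun y : ℝ => c*(y-a)) c x := by
    simpa using ((hasDerivAt_id x).sub_const a).const_mul c
  have hs : HasDerivAt (fun y => Real.sin (c*(y-a))) (Real.cos (c*(x-a)) * c) x :=
    (Real.hasDerivAt_sin _).comp x h1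
  have hco : HasDerivAt (fun y => Real.cos (c*(y-a))) (-Real.sin (c*(x-a)) * c) x :=
    (Real.hasDerivAt_cos _).comp x h1
  have hq := hco.div hs hsx
  have hf2 : HasDerivAt (fun y => f y ^ 2) (2 * f x * f' x) x := by
    simpa using hfx.fun_pow 2
  have h : HasDerivAt (fun y => c * (f y ^ 2 * (Real.cos (c*(y-a)) / Real.sin (c*(y-a))))) _ x :=
    ((hf2.mul (hco.fun_div hs hsx))).const_mul c
  convert h using 1
  field_simp
  ring_nf

theorem stmt_2 (a b : ℝ) (hab : a < b) (f f' : ℝ → ℝ)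
    (hf : ContinuousOn f (Set.Icc a b))
    (hderiv : ∀ x ∈ Set.Icc a b, HasDerivWithinAt f (f' x) (Set.Icc a b) x)
    (hf' : ContinuousOn f' (Set.Icc a b))
    (ha : f a = 0) (hb : f b = 0) :
    (Real.pi ^ 2 / (b - a) ^ 2) * ∫ x in a..b, (f x) ^ 2 ≤
      ∫ x in a..b, (f' x) ^ 2 := by
  have hba : (0:ℝ) < b - a := by linarith
  have hπ := Real.pi_pos
  set c : ℝ := Real.pi / (b - a) with hc_def
  have hc : 0 < c := div_pos hπ hba
  have hcb : c * (b - a) = Real.pi := by rw [hc_def]; field_simp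
  have hf2int : IntervalIntegrable (fun x => f x ^ 2) MeasureTheory.volume a b := by
    apply ContinuousOn.intervalIntegrable
    rw [Set.uIcc_of_le hab.le]; exact hf.pow 2
  have hf'2int : IntervalIntegrable (fun x => f' x ^ 2) MeasureTheory.volume a b := by
    apply ContinuousOn.intervalIntegrable
    rw [Set.uIcc_of_le hab.le]; exact hf'.pow 2
  set G : ℝ → ℝ := fun x => f' x ^ 2 - c^2 * f x ^ 2 with hG_def
  have hGcont : ContinuousOn G (Set.Icc a b) :=
    (hf'.pow 2).sub (continuousOn_const.mul (hf.pow 2))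
  have hGint : IntervalIntegrable G MeasureTheory.volume a b := by
    apply ContinuousOn.intervalIntegrable
    rw [Set.uIcc_of_le hab.le]; exact hGcont
  obtain ⟨M, hM⟩ := isCompact_Icc.exists_bound_of_continuousOn hGcont
  have hM0 : 0 ≤ M := le_trans (norm_nonneg _) (hM a (Set.left_mem_Icc.mpr hab.le))
  obtain ⟨K, hK⟩ := isCompact_Icc.exists_bound_of_continuousOn hf'
  have hK0 : 0 ≤ K := le_trans (norm_nonneg _) (hK a (Set.left_mem_Icc.mpr hab.le))
  -- key estimate for every small ε
  have key : ∀ ε : ℝ, 0 < ε → ε ≤ (b-a)/4 → -((2*K^2 + 2*M) * ε) ≤ ∫ x in a..b, G x := by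
    intro ε hε hε4
    set p : ℝ := a + ε with hp_def
    set q : ℝ := b - ε with hq_def
    have hap : a < p := by rw [hp_def]; linarith
    have hpq : p ≤ q := by rw [hp_def, hq_def]; linarith
    have hqb : q < b := by rw [hq_def]; linarith
    have hsub : Set.Icc p q ⊆ Set.Icc a b := Set.Icc_subset_Icc hap.le hqb.le
    have hsin : ∀ x ∈ Set.Icc p q, 0 < Real.sin (c*(x-a)) := by
      intro x hx
      apply Real.sin_pos_of_pos_of_lt_pi
      · have h1 : a < x := lt_of_lt_of_le hap hx.1
        nlinarith
      · have h2 : x < b := lt_of_le_of_lt hx.2 hqb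
        nlinarith
    -- derivative of Φ on [p,q]
    set Φ : ℝ → ℝ := fun y => c * (f y ^ 2 * (Real.cos (c*(y-a)) / Real.sin (c*(y-a)))) with hΦ_def
    set φ : ℝ → ℝ := fun x => G x
      - (f' x - c * f x * (Real.cos (c*(x-a)) / Real.sin (c*(x-a))))^2 with hφ_def
    have hderivΦ : ∀ x ∈ Set.uIcc p q, HasDerivAt Φ (φ x) x := by
      intro x hx
      rw [Set.uIcc_of_le hpq] at hx
      have hxab : x ∈ Set.Icc a b := hsub hx
      have hxo : Set.Icc a b ∈ nhds x :=
        Icc_mem_nhds (lt_of_lt_of_le hap hx.1) (lt_of_le_of_lt hx.2 hqb)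
      have hfx : HasDerivAt f (f' x) x := (hderiv x hxab).hasDerivAt hxo
      exact hasDerivAt_Phi_aux c a f f' x hfx (ne_of_gt (hsin x hx))
    have hcos : ContinuousOn (fun x => Real.cos (c*(x-a)) / Real.sin (c*(x-a))) (Set.Icc p q) := by
      apply ContinuousOn.div
      · exact (Real.continuous_cos.comp (by continuity)).continuousOn
      · exact (Real.continuous_sin.comp (by continuity)).continuousOn
      · exact fun x hx => ne_of_gt (hsin x hx)
    have hφcont : ContinuousOn φ (Set.Icc p q) :=
      (hGcont.mono hsub).sub
        (((hf'.mono hsub).sub ((continuousOn_const.mul (hf.mono hsub)).mul hcos)).pow 2)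
    have hφint : IntervalIntegrable φ MeasureTheory.volume p q := by
      apply ContinuousOn.intervalIntegrable
      rwa [Set.uIcc_of_le hpq]
    have hGpq : IntervalIntegrable G MeasureTheory.volume p q := by
      apply ContinuousOn.intervalIntegrable
      rw [Set.uIcc_of_le hpq]; exact hGcont.mono hsub
    have hsqint : IntervalIntegrable
        (fun x => (f' x - c * f x * (Real.cos (c*(x-a)) / Real.sin (c*(x-a))))^2)
        MeasureTheory.volume p q := by
      apply ContinuousOn.intervalIntegrable
      rw [Set.uIcc_of_le hpq]
      exact ((hf'.mono hsub).sub ((continuousOn_const.mul (hf.mono hsub)).mul hcos)).pow 2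
    have hFTC : ∫ x in p..q, φ x = Φ q - Φ p :=
      intervalIntegral.integral_eq_sub_of_hasDerivAt hderivΦ hφint
    have hsplit : ∫ x in p..q, G x = (∫ x in p..q, φ x)
        + ∫ x in p..q, (f' x - c * f x * (Real.cos (c*(x-a)) / Real.sin (c*(x-a))))^2 := by
      rw [← intervalIntegral.integral_add hφint hsqint]
      apply intervalIntegral.integral_congr
      intro x hx
      simp only [hφ_def]; ring
    have hsqnn : 0 ≤ ∫ x in p..q,
        (f' x - c * f x * (Real.cos (c*(x-a)) / Real.sin (c*(x-a))))^2 :=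
      intervalIntegral.integral_nonneg hpq (fun u _ => sq_nonneg _)
    -- boundary estimate
    have ht : 0 < c * ε := mul_pos hc hε
    have htlt : c * ε < Real.pi / 2 := by nlinarith
    have hcosε : 0 < Real.cos (c*ε) := Real.cos_pos_of_mem_Ioo ⟨by linarith, htlt⟩
    have hsinε : 0 < Real.sin (c*ε) := Real.sin_pos_of_pos_of_lt_pi ht (by linarith)
    have hcot0 : 0 ≤ Real.cos (c*ε) / Real.sin (c*ε) := (div_nonneg hcosε.le hsinε.le)
    have hcot1 : Real.cos (c*ε) / Real.sin (c*ε) ≤ 1/(c*ε) := cot_bound_aux _ ht htlt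
    have hcotmul : Real.cos (c*ε) / Real.sin (c*ε) * (c*ε) ≤ 1 := by
      have := mul_le_mul_of_nonneg_right hcot1 ht.le
      rwa [one_div, inv_mul_cancel₀ (ne_of_gt ht)] at this
    have hfp : |f p| ≤ K * ε := by
      have := Convex.norm_image_sub_le_of_norm_hasDerivWithin_le hderiv hK (convex_Icc a b)
        (Set.left_mem_Icc.mpr hab.le) (hsub (Set.left_mem_Icc.mpr hpq))
      rw [ha, sub_zero, Real.norm_eq_abs, Real.norm_eq_abs] at this
      calc |f p| ≤ K * |p - a| := this
        _ = K * ε := by rw [hp_def]; simp [abs_of_pos hε]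
    have hfq : |f q| ≤ K * ε := by
      have := Convex.norm_image_sub_le_of_norm_hasDerivWithin_le hderiv hK (convex_Icc a b)
        (Set.right_mem_Icc.mpr hab.le) (hsub (Set.right_mem_Icc.mpr hpq))
      rw [hb, sub_zero, Real.norm_eq_abs, Real.norm_eq_abs] at this
      calc |f q| ≤ K * |q - b| := this
        _ = K * ε := by rw [hq_def]; rw [show b - ε - b = -ε by ring]; simp [abs_of_pos hε]
    have hfp2 : f p ^ 2 ≤ K^2 * ε^2 := by nlinarith [abs_nonneg (f p), sq_abs (f p)]
    have hfq2 : f q ^ 2 ≤ K^2 * ε^2 := by nlinarith [abs_nonneg (f q), sq_abs (f q)]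
    have hpa' : c * (p - a) = c * ε := by rw [hp_def]; ring
    have hqa' : c * (q - a) = Real.pi - c * ε := by
      have : c * (q - a) = c * (b - a) - c * ε := by rw [hq_def]; ring
      rw [this, hcb]
    have hΦp : Φ p = c * (f p ^ 2 * (Real.cos (c*ε) / Real.sin (c*ε))) := by
      rw [hΦ_def]; simp only [hpa']
    have hΦq : Φ q = -(c * (f q ^ 2 * (Real.cos (c*ε) / Real.sin (c*ε)))) := by
      rw [hΦ_def]; simp only [hqa', Real.cos_pi_sub, Real.sin_pi_sub]; ring
    have hbd : -(2*K^2*ε) ≤ Φ q - Φ p := by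
      rw [hΦp, hΦq]
      have h1 : c * (f q ^ 2 * (Real.cos (c*ε) / Real.sin (c*ε))) ≤ K^2 * ε := by
        have e1 : c * (f q ^ 2 * (Real.cos (c*ε) / Real.sin (c*ε)))
            ≤ c * (K^2*ε^2 * (Real.cos (c*ε) / Real.sin (c*ε))) := by
          apply mul_le_mul_of_nonneg_left _ hc.le
          exact mul_le_mul_of_nonneg_right hfq2 hcot0
        have e2 : c * (K^2*ε^2 * (Real.cos (c*ε) / Real.sin (c*ε)))
            = K^2 * ε * (Real.cos (c*ε) / Real.sin (c*ε) * (c*ε)) := by ring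
        have e3 : K^2 * ε * (Real.cos (c*ε) / Real.sin (c*ε) * (c*ε)) ≤ K^2 * ε * 1 :=
          mul_le_mul_of_nonneg_left hcotmul (by positivity)
        calc c * (f q ^ 2 * (Real.cos (c*ε) / Real.sin (c*ε))) ≤ _ := e1
          _ = _ := e2
          _ ≤ K^2 * ε * 1 := e3
          _ = K^2 * ε := by ring
      have h2 : c * (f p ^ 2 * (Real.cos (c*ε) / Real.sin (c*ε))) ≤ K^2 * ε := by
        have e1 : c * (f p ^ 2 * (Real.cos (c*ε) / Real.sin (c*ε)))
            ≤ c * (K^2*ε^2 * (Real.cos (c*ε) / Real.sin (c*ε))) := by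
          apply mul_le_mul_of_nonneg_left _ hc.le
          exact mul_le_mul_of_nonneg_right hfp2 hcot0
        have e2 : c * (K^2*ε^2 * (Real.cos (c*ε) / Real.sin (c*ε)))
            = K^2 * ε * (Real.cos (c*ε) / Real.sin (c*ε) * (c*ε)) := by ring
        have e3 : K^2 * ε * (Real.cos (c*ε) / Real.sin (c*ε) * (c*ε)) ≤ K^2 * ε * 1 :=
          mul_le_mul_of_nonneg_left hcotmul (by positivity)
        calc c * (f p ^ 2 * (Real.cos (c*ε) / Real.sin (c*ε))) ≤ _ := e1
          _ = _ := e2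
          _ ≤ K^2 * ε * 1 := e3
          _ = K^2 * ε := by ring
      linarith
    have hmid : -(2*K^2*ε) ≤ ∫ x in p..q, G x := by
      rw [hsplit, hFTC]; linarith
    -- edge integrals
    have hGap : IntervalIntegrable G MeasureTheory.volume a p := by
      apply hGint.mono_set
      rw [Set.uIcc_of_le hap.le, Set.uIcc_of_le hab.le]
      exact Set.Icc_subset_Icc le_rfl (by linarith)
    have hGpb : IntervalIntegrable G MeasureTheory.volume p b := by
      apply hGint.mono_set
      rw [Set.uIcc_of_le (le_trans hpq hqb.le), Set.uIcc_of_le hab.le]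
      exact Set.Icc_subset_Icc hap.le le_rfl
    have hGqb : IntervalIntegrable G MeasureTheory.volume q b := by
      apply hGint.mono_set
      rw [Set.uIcc_of_le hqb.le, Set.uIcc_of_le hab.le]
      exact Set.Icc_subset_Icc (by linarith) le_rfl
    have e1 : (∫ x in a..p, G x) + ∫ x in p..b, G x = ∫ x in a..b, G x :=
      intervalIntegral.integral_add_adjacent_intervals hGap hGpb
    have e2 : (∫ x in p..q, G x) + ∫ x in q..b, G x = ∫ x in p..b, G x :=
      intervalIntegral.integral_add_adjacent_intervals hGpq hGqb
    have hedge1 : |∫ x in a..p, G x| ≤ M * ε := by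
      have hbd := intervalIntegral.norm_integral_le_of_norm_le_const (C := M)
        (f := G) (a := a) (b := p) ?_
      · rw [Real.norm_eq_abs] at hbd
        calc |∫ x in a..p, G x| ≤ M * |p - a| := hbd
          _ = M * ε := by rw [hp_def]; simp [abs_of_pos hε]
      · intro x hx
        rw [Set.uIoc_of_le hap.le] at hx
        exact hM x ⟨hx.1.le, le_trans hx.2 (by linarith)⟩
    have hedge2 : |∫ x in q..b, G x| ≤ M * ε := by
      have hbd := intervalIntegral.norm_integral_le_of_norm_le_const (C := M)
        (f := G) (a := q) (b := b) ?_
      · rw [Real.norm_eq_abs] at hbd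
        calc |∫ x in q..b, G x| ≤ M * |b - q| := hbd
          _ = M * ε := by rw [hq_def]; rw [show b - (b - ε) = ε by ring]; simp [abs_of_pos hε]
      · intro x hx
        rw [Set.uIoc_of_le hqb.le] at hx
        exact hM x ⟨by linarith [hx.1, hap.le, hpq], hx.2⟩
    have hA := abs_le.mp hedge1
    have hB := abs_le.mp hedge2
    linarith [e1, e2, hmid, hA.1, hB.1]
  -- conclude nonnegativity
  have hS : 0 ≤ ∫ x in a..b, G x := by
    by_contra hneg
    push_neg at hneg
    set S := ∫ x in a..b, G x with hS_def
    set C : ℝ := 2*K^2 + 2*M with hC_def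
    have hC0 : 0 ≤ C := by positivity
    set ε : ℝ := min ((b-a)/4) (-S/(C+1)) with hε_def
    have hε : 0 < ε := lt_min (by linarith) (div_pos (by linarith) (by linarith))
    have hεle : ε ≤ (b-a)/4 := min_le_left _ _
    have hεle2 : ε ≤ -S/(C+1) := min_le_right _ _
    have hkey := key ε hε hεle
    have hmul : ε * (C+1) ≤ -S := by
      rw [le_div_iff₀ (by linarith : (0:ℝ) < C+1)] at hεle2
      linarith
    nlinarith
  have hsub : (∫ x in a..b, G x) = (∫ x in a..b, f' x ^ 2) - c^2 * ∫ x in a..b, f x ^ 2 := by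
    rw [hG_def]
    rw [intervalIntegral.integral_sub hf'2int (hf2int.const_mul (c^2))]
    rw [intervalIntegral.integral_const_mul]
  have hc2 : c^2 = Real.pi^2 / (b-a)^2 := by rw [hc_def, div_pow]
  rw [← hc2]
  linarith [hS, hsub.symm ▸ hS]
end

section
/- (Theorem 3.1, part 1: equivalent form of G₂.) Let a < b be real numbers and let f, g : ℝ → ℝ be continuous on [a,b]. Then ∫_a^b (D_g(x) − D_f(x))² dx = ∫_a^b (D_g(x)² − D_f(x)²) dx − 2 ∫_a^b f(x) · (u_g(x) − u_f(x)) dx. -/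
open intervalIntegral Filter MeasureTheory Set

/-- `DFun a b f = (uFun a b f)'`, the derivative of `-Δ⁻¹ f`. -/
noncomputable def DFun (a b : ℝ) (f : ℝ → ℝ) (x : ℝ) : ℝ :=
  -(∫ ξ in a..x, f ξ) + (1 / (b - a)) * ∫ η in a..b, ∫ ξ in a..η, f ξ

section Aux

variable {a b : ℝ} {f g : ℝ → ℝ}

lemma cint (hab : a ≤ b) {φ : ℝ → ℝ} (h : ContinuousOn φ (Icc a b)) :
    IntervalIntegrable φ volume a b := by
  apply ContinuousOn.intervalIntegrable
  rwa [uIcc_of_le hab]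

lemma primCont (hab : a ≤ b) (hf : ContinuousOn f (Icc a b)) :
    ContinuousOn (fun η => ∫ ξ in a..η, f ξ) (Icc a b) := by
  have h := intervalIntegral.continuousOn_primitive_interval
    (f := f) (μ := volume) (a := a) (b := b)
    (by rw [uIcc_of_le hab]; exact hf.integrableOn_Icc)
  rwa [uIcc_of_le hab] at h

lemma hD_deriv (hab : a ≤ b) (hf : ContinuousOn f (Icc a b)) :
    ∀ x ∈ Icc a b, HasDerivWithinAt (DFun a b f) (-(f x)) (Icc a b) x := by
  intro x hx
  haveI : Fact (x ∈ Icc a b) := ⟨hx⟩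
  have hfi : IntervalIntegrable f volume a x :=
    (hf.mono (by rw [uIcc_of_le hx.1]; exact Icc_subset_Icc le_rfl hx.2)).intervalIntegrable
  have h1 : HasDerivWithinAt (fun u => ∫ ξ in a..u, f ξ) (f x) (Icc a b) x :=
    intervalIntegral.integral_hasDerivWithinAt_right hfi
      (hf.stronglyMeasurableAtFilter_nhdsWithin measurableSet_Icc x) (hf x hx)
  have heq : DFun a b f =
      fun u => -(∫ ξ in a..u, f ξ) + (1 / (b - a)) * ∫ η in a..b, ∫ ξ in a..η, f ξ := rfl
  rw [heq]
  exact (h1.neg).add_const _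

lemma hu_deriv (hab : a ≤ b) (hg : ContinuousOn g (Icc a b)) :
    ∀ x ∈ Icc a b, HasDerivWithinAt (uFun a b g) (DFun a b g x) (Icc a b) x := by
  intro x hx
  haveI : Fact (x ∈ Icc a b) := ⟨hx⟩
  set F : ℝ → ℝ := fun η => ∫ ξ in a..η, g ξ with hF
  set C : ℝ := ∫ η in a..b, ∫ ξ in a..η, g ξ with hC
  have hFc : ContinuousOn F (Icc a b) := primCont hab hg
  have hFi : IntervalIntegrable F volume b x :=
    (hFc.mono (by rw [uIcc_comm, uIcc_of_le hx.2]; exact Icc_subset_Icc hx.1 le_rfl)).intervalIntegrable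
  have h1 : HasDerivWithinAt (fun u => ∫ η in b..u, F η) (F x) (Icc a b) x :=
    intervalIntegral.integral_hasDerivWithinAt_right hFi
      (hFc.stronglyMeasurableAtFilter_nhdsWithin measurableSet_Icc x) (hFc x hx)
  have h1' : HasDerivWithinAt (fun u => ∫ η in u..b, F η) (-(F x)) (Icc a b) x := by
    have : HasDerivWithinAt (fun u => -∫ η in b..u, F η) (-(F x)) (Icc a b) x := h1.neg
    simpa [intervalIntegral.integral_symm b] using this
  have h2 : HasDerivAt (fun u : ℝ => ((b - u) / (b - a)) * C) (-1 / (b - a) * C) x := by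
    exact (((hasDerivAt_id x).const_sub b).div_const (b - a)).mul_const C
  have h3 := h1'.sub (h2.hasDerivWithinAt)
  have : -(F x) - -1 / (b - a) * C = DFun a b g x := by
    simp only [DFun, hF, hC]
    ring
  rw [this] at h3
  exact h3

lemma DCont (hab : a ≤ b) (hf : ContinuousOn f (Icc a b)) :
    ContinuousOn (DFun a b f) (Icc a b) :=
  fun x hx => (hD_deriv hab hf x hx).continuousWithinAt

lemma uCont (hab : a ≤ b) (hf : ContinuousOn f (Icc a b)) :
    ContinuousOn (uFun a b f) (Icc a b) :=
  fun x hx => (hu_deriv hab hf x hx).continuousWithinAt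

lemma uFun_a (hab : a < b) : uFun a b g a = 0 := by
  rw [uFun, div_self (sub_ne_zero.mpr hab.ne'), one_mul, sub_self]

lemma uFun_b : uFun a b g b = 0 := by
  simp [uFun]

lemma key (hab : a < b) (hf : ContinuousOn f (Icc a b)) (hg : ContinuousOn g (Icc a b)) :
    (∫ x in a..b, DFun a b f x * DFun a b g x) = ∫ x in a..b, f x * uFun a b g x := by
  have hab' := hab.le
  have h := intervalIntegral.integral_mul_deriv_eq_deriv_mul_of_hasDerivWithinAt
    (u := DFun a b f) (v := uFun a b g) (u' := fun x => -(f x)) (v' := DFun a b g)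
    (by rw [uIcc_of_le hab']; exact hD_deriv hab' hf)
    (by rw [uIcc_of_le hab']; exact hu_deriv hab' hg)
    (cint hab' hf.neg) (cint hab' (DCont hab' hg))
  rw [uFun_a hab, uFun_b] at h
  rw [h]
  simp only [neg_mul, intervalIntegral.integral_neg]
  ring

end Aux

theorem stmt_5 (a b : ℝ) (hab : a < b) (f g : ℝ → ℝ)
    (hf : ContinuousOn f (Set.Icc a b)) (hg : ContinuousOn g (Set.Icc a b)) :
    (∫ x in a..b, (DFun a b g x - DFun a b f x) ^ 2) =
      (∫ x in a..b, ((DFun a b g x) ^ 2 - (DFun a b f x) ^ 2)) -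
        2 * ∫ x in a..b, f x * (uFun a b g x - uFun a b f x) := by
  have hab' := hab.le
  have hDf := DCont hab' hf
  have hDg := DCont hab' hg
  have huf := uCont hab' hf
  have hug := uCont hab' hg
  have i1 : IntervalIntegrable (fun x => DFun a b g x ^ 2 - DFun a b f x ^ 2) volume a b :=
    cint hab' ((hDg.pow 2).sub (hDf.pow 2))
  have i2 : IntervalIntegrable (fun x => DFun a b f x * DFun a b g x) volume a b :=
    cint hab' (hDf.mul hDg)
  have i3 : IntervalIntegrable (fun x => DFun a b f x * DFun a b f x) volume a b :=
    cint hab' (hDf.mul hDf)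
  have i4 : IntervalIntegrable (fun x => f x * uFun a b g x) volume a b :=
    cint hab' (hf.mul hug)
  have i5 : IntervalIntegrable (fun x => f x * uFun a b f x) volume a b :=
    cint hab' (hf.mul huf)
  have e1 : (∫ x in a..b, (DFun a b g x - DFun a b f x) ^ 2) =
      ∫ x in a..b, ((DFun a b g x ^ 2 - DFun a b f x ^ 2) -
        2 * (DFun a b f x * DFun a b g x - DFun a b f x * DFun a b f x)) := by
    apply intervalIntegral.integral_congr
    intro x _
    ring
  have e4 : (∫ x in a..b, f x * (uFun a b g x - uFun a b f x)) =
      (∫ x in a..b, f x * uFun a b g x) - ∫ x in a..b, f x * uFun a b f x := by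
    rw [← intervalIntegral.integral_sub i4 i5]
    apply intervalIntegral.integral_congr
    intro x _
    ring
  rw [e1, intervalIntegral.integral_sub i1 (by exact (i2.sub i3).const_mul 2),
    intervalIntegral.integral_const_mul, intervalIntegral.integral_sub i2 i3,
    key hab hf hg, key hab hf hf, e4]
end

section
/- (Theorem 3.1, part 2: difference formula for G₂.) Let a < b be real numbers and let f₁, f₂, g : ℝ → ℝ be continuous on [a,b]. Then ∫_a^b (D_g(x) − D_{f₁}(x))² dx − ∫_a^b (D_g(x) − D_{f₂}(x))² dx = −2 ∫_a^b (f₁(x) − f₂(x)) · ( u_g(x) − (u_{f₁}(x) + u_{f₂}(x))/2 ) dx. -/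
open intervalIntegral Filter

section helpers

variable {a b : ℝ} {f h : ℝ → ℝ}

lemma primitive_hasDerivAt (hf : Continuous f) (x : ℝ) :
    HasDerivAt (fun t => ∫ ξ in a..t, f ξ) (f x) x :=
  intervalIntegral.integral_hasDerivAt_right (hf.intervalIntegrable a x)
    (hf.stronglyMeasurableAtFilter _ _) hf.continuousAt

lemma primitive_continuous (hf : Continuous f) :
    Continuous (fun t => ∫ ξ in a..t, f ξ) :=
  continuous_iff_continuousAt.2 fun x => (primitive_hasDerivAt hf x).continuousAt

lemma DFun_hasDerivAt (hf : Continuous f) (x : ℝ) :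
    HasDerivAt (DFun a b f) (-(f x)) x := by
  unfold DFun
  exact ((primitive_hasDerivAt hf x).neg).add_const _

lemma DFun_continuous (hf : Continuous f) : Continuous (DFun a b f) :=
  continuous_iff_continuousAt.2 fun x => (DFun_hasDerivAt hf x).continuousAt

lemma uFun_hasDerivAt (hf : Continuous f) (x : ℝ) :
    HasDerivAt (uFun a b f) (DFun a b f x) x := by
  have hF : Continuous (fun t => ∫ ξ in a..t, f ξ) := primitive_continuous hf
  have h1 : HasDerivAt (fun t => ∫ η in t..b, ∫ ξ in a..η, f ξ)
      (-(∫ ξ in a..x, f ξ)) x := by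
    have : HasDerivAt (fun t => ∫ η in b..t, ∫ ξ in a..η, f ξ)
        (∫ ξ in a..x, f ξ) x :=
      intervalIntegral.integral_hasDerivAt_right (hF.intervalIntegrable b x)
        (hF.stronglyMeasurableAtFilter _ _) hF.continuousAt
    have heq : (fun t => ∫ η in t..b, ∫ ξ in a..η, f ξ)
        = fun t => -(∫ η in b..t, ∫ ξ in a..η, f ξ) := by
      funext t; rw [intervalIntegral.integral_symm]
    rw [heq]
    exact this.neg
  have h2 : HasDerivAt (fun t => ((b - t) / (b - a)) *
      ∫ η in a..b, ∫ ξ in a..η, f ξ)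
      (((-1) / (b - a)) * ∫ η in a..b, ∫ ξ in a..η, f ξ) x :=
    (((hasDerivAt_id x).const_sub b).div_const (b - a)).mul_const _
  have := h1.sub h2
  refine this.congr_deriv ?_
  unfold DFun
  ring

lemma uFun_continuous (hf : Continuous f) : Continuous (uFun a b f) :=
  continuous_iff_continuousAt.2 fun x => (uFun_hasDerivAt hf x).continuousAt

lemma uFun_left (hab : a < b) : uFun a b f a = 0 := by
  unfold uFun
  rw [div_self (by linarith : b - a ≠ 0)]
  ring

lemma uFun_right : uFun a b f b = 0 := by
  unfold uFun
  simp

/-- Integration by parts: `∫ D_f D_h = ∫ f u_h`. -/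
lemma parts (hab : a < b) (hf : Continuous f) (hh : Continuous h) :
    ∫ x in a..b, DFun a b f x * DFun a b h x = ∫ x in a..b, f x * uFun a b h x := by
  have key := intervalIntegral.integral_deriv_mul_eq_sub
    (u := DFun a b f) (v := uFun a b h) (u' := fun x => -(f x)) (v' := DFun a b h)
    (fun x _ => DFun_hasDerivAt hf x) (fun x _ => uFun_hasDerivAt hh x)
    (hf.neg.intervalIntegrable a b) ((DFun_continuous hh).intervalIntegrable a b)
  rw [uFun_left hab, uFun_right, mul_zero, mul_zero, sub_zero] at key
  have key' : ∫ x in a..b, (-(f x) * uFun a b h x + DFun a b f x * DFun a b h x) = 0 := key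
  have hsplit : ∫ x in a..b, (-(f x) * uFun a b h x + DFun a b f x * DFun a b h x)
      = (∫ x in a..b, -(f x) * uFun a b h x) +
        ∫ x in a..b, DFun a b f x * DFun a b h x :=
    intervalIntegral.integral_add
      ((hf.neg.mul (uFun_continuous hh)).intervalIntegrable a b)
      (((DFun_continuous hf).mul (DFun_continuous hh)).intervalIntegrable a b)
  have hneg : (∫ x in a..b, -(f x) * uFun a b h x) = -∫ x in a..b, f x * uFun a b h x := by
    rw [← intervalIntegral.integral_neg]
    congr 1; funext x; ring
  rw [hsplit, hneg] at key'
  linarith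

lemma pairing_symm (hab : a < b) (hf : Continuous f) (hh : Continuous h) :
    ∫ x in a..b, f x * uFun a b h x = ∫ x in a..b, h x * uFun a b f x := by
  rw [← parts hab hf hh, ← parts hab hh hf]
  simp_rw [mul_comm]

lemma DFun_sub (hf : Continuous f) (hh : Continuous h) (x : ℝ) :
    DFun a b (f - h) x = DFun a b f x - DFun a b h x := by
  unfold DFun
  have h1 : ∀ t : ℝ, (∫ ξ in a..t, (f - h) ξ) = (∫ ξ in a..t, f ξ) - ∫ ξ in a..t, h ξ := by
    intro t
    exact intervalIntegral.integral_sub (hf.intervalIntegrable a t) (hh.intervalIntegrable a t)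
  have h2 : (∫ η in a..b, ∫ ξ in a..η, (f - h) ξ)
      = (∫ η in a..b, ∫ ξ in a..η, f ξ) - ∫ η in a..b, ∫ ξ in a..η, h ξ := by
    simp_rw [h1]
    exact intervalIntegral.integral_sub
      ((primitive_continuous hf).intervalIntegrable a b)
      ((primitive_continuous hh).intervalIntegrable a b)
  rw [h1, h2]; ring

lemma uFun_sub (hf : Continuous f) (hh : Continuous h) (x : ℝ) :
    uFun a b (f - h) x = uFun a b f x - uFun a b h x := by
  unfold uFun
  have h1 : ∀ t : ℝ, (∫ ξ in a..t, (f - h) ξ) = (∫ ξ in a..t, f ξ) - ∫ ξ in a..t, h ξ := by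
    intro t
    exact intervalIntegral.integral_sub (hf.intervalIntegrable a t) (hh.intervalIntegrable a t)
  have h2 : ∀ s t : ℝ, (∫ η in s..t, ∫ ξ in a..η, (f - h) ξ)
      = (∫ η in s..t, ∫ ξ in a..η, f ξ) - ∫ η in s..t, ∫ ξ in a..η, h ξ := by
    intro s t
    simp_rw [h1]
    exact intervalIntegral.integral_sub
      ((primitive_continuous hf).intervalIntegrable s t)
      ((primitive_continuous hh).intervalIntegrable s t)
  rw [h2, h2]; ring

/-- Main theorem for globally continuous functions. -/
lemma main_cont (hab : a < b) (f₁ f₂ g : ℝ → ℝ)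
    (hf₁ : Continuous f₁) (hf₂ : Continuous f₂) (hg : Continuous g) :
    (∫ x in a..b, (DFun a b g x - DFun a b f₁ x) ^ 2) -
        (∫ x in a..b, (DFun a b g x - DFun a b f₂ x) ^ 2) =
      -2 * ∫ x in a..b, (f₁ x - f₂ x) *
        (uFun a b g x - (uFun a b f₁ x + uFun a b f₂ x) / 2) := by
  set h₁ := g - f₁ with hh₁
  set h₂ := g - f₂ with hh₂
  have ch₁ : Continuous h₁ := hg.sub hf₁
  have ch₂ : Continuous h₂ := hg.sub hf₂
  have e1 : (∫ x in a..b, (DFun a b g x - DFun a b f₁ x) ^ 2)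
      = ∫ x in a..b, h₁ x * uFun a b h₁ x := by
    rw [← parts hab ch₁ ch₁]
    apply intervalIntegral.integral_congr
    intro x _
    beta_reduce
    rw [DFun_sub hg hf₁]
    ring
  have e2 : (∫ x in a..b, (DFun a b g x - DFun a b f₂ x) ^ 2)
      = ∫ x in a..b, h₂ x * uFun a b h₂ x := by
    rw [← parts hab ch₂ ch₂]
    apply intervalIntegral.integral_congr
    intro x _
    beta_reduce
    rw [DFun_sub hg hf₂]
    ring
  have e3 : (∫ x in a..b, (f₁ x - f₂ x) *
        (uFun a b g x - (uFun a b f₁ x + uFun a b f₂ x) / 2))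
      = ∫ x in a..b, ((h₂ x * uFun a b h₁ x + h₂ x * uFun a b h₂ x) / 2
          - (h₁ x * uFun a b h₁ x + h₁ x * uFun a b h₂ x) / 2) := by
    apply intervalIntegral.integral_congr
    intro x _
    beta_reduce
    have u1 : uFun a b h₁ x = uFun a b g x - uFun a b f₁ x := uFun_sub hg hf₁ x
    have u2 : uFun a b h₂ x = uFun a b g x - uFun a b f₂ x := uFun_sub hg hf₂ x
    have hd : f₁ x - f₂ x = h₂ x - h₁ x := by simp [hh₁, hh₂]
    rw [hd, u1, u2]; ring
  have i11 : IntervalIntegrable (fun x => h₁ x * uFun a b h₁ x) MeasureTheory.volume a b :=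
    (ch₁.mul (uFun_continuous ch₁)).intervalIntegrable a b
  have i12 : IntervalIntegrable (fun x => h₁ x * uFun a b h₂ x) MeasureTheory.volume a b :=
    (ch₁.mul (uFun_continuous ch₂)).intervalIntegrable a b
  have i21 : IntervalIntegrable (fun x => h₂ x * uFun a b h₁ x) MeasureTheory.volume a b :=
    (ch₂.mul (uFun_continuous ch₁)).intervalIntegrable a b
  have i22 : IntervalIntegrable (fun x => h₂ x * uFun a b h₂ x) MeasureTheory.volume a b :=
    (ch₂.mul (uFun_continuous ch₂)).intervalIntegrable a b
  have e4 : (∫ x in a..b, ((h₂ x * uFun a b h₁ x + h₂ x * uFun a b h₂ x) / 2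
          - (h₁ x * uFun a b h₁ x + h₁ x * uFun a b h₂ x) / 2))
      = ((∫ x in a..b, h₂ x * uFun a b h₁ x) + ∫ x in a..b, h₂ x * uFun a b h₂ x) / 2
        - ((∫ x in a..b, h₁ x * uFun a b h₁ x) + ∫ x in a..b, h₁ x * uFun a b h₂ x) / 2 := by
    rw [← intervalIntegral.integral_add i21 i22, ← intervalIntegral.integral_add i11 i12,
      ← intervalIntegral.integral_div, ← intervalIntegral.integral_div,
      ← intervalIntegral.integral_sub ((i21.add i22).div_const 2) ((i11.add i12).div_const 2)]
  have sym : (∫ x in a..b, h₁ x * uFun a b h₂ x) = ∫ x in a..b, h₂ x * uFun a b h₁ x :=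
    pairing_symm hab ch₁ ch₂
  rw [e1, e2, e3, e4, sym]
  ring

end helpers

section reduction

variable {a b : ℝ} {f f' : ℝ → ℝ}

lemma prim_congr (hab : a ≤ b) (hff' : Set.EqOn f f' (Set.Icc a b)) :
    ∀ η ∈ Set.Icc a b, (∫ ξ in a..η, f ξ) = ∫ ξ in a..η, f' ξ := by
  intro η hη
  apply intervalIntegral.integral_congr
  intro ξ hξ
  apply hff'
  rw [Set.uIcc_of_le hη.1] at hξ
  exact ⟨hξ.1, le_trans hξ.2 hη.2⟩

lemma DFun_congr (hab : a ≤ b) (hff' : Set.EqOn f f' (Set.Icc a b)) :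
    ∀ x ∈ Set.Icc a b, DFun a b f x = DFun a b f' x := by
  intro x hx
  unfold DFun
  rw [prim_congr hab hff' x hx]
  congr 2
  apply intervalIntegral.integral_congr
  intro η hη
  rw [Set.uIcc_of_le hab] at hη
  exact prim_congr hab hff' η hη

lemma uFun_congr (hab : a ≤ b) (hff' : Set.EqOn f f' (Set.Icc a b)) :
    ∀ x ∈ Set.Icc a b, uFun a b f x = uFun a b f' x := by
  intro x hx
  unfold uFun
  have h1 : (∫ η in x..b, ∫ ξ in a..η, f ξ) = ∫ η in x..b, ∫ ξ in a..η, f' ξ := by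
    apply intervalIntegral.integral_congr
    intro η hη
    rw [Set.uIcc_of_le hx.2] at hη
    exact prim_congr hab hff' η ⟨le_trans hx.1 hη.1, hη.2⟩
  have h2 : (∫ η in a..b, ∫ ξ in a..η, f ξ) = ∫ η in a..b, ∫ ξ in a..η, f' ξ := by
    apply intervalIntegral.integral_congr
    intro η hη
    rw [Set.uIcc_of_le hab] at hη
    exact prim_congr hab hff' η hη
  rw [h1, h2]

end reduction


theorem stmt_6 (a b : ℝ) (hab : a < b) (f₁ f₂ g : ℝ → ℝ)
    (hf₁ : ContinuousOn f₁ (Set.Icc a b)) (hf₂ : ContinuousOn f₂ (Set.Icc a b))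
    (hg : ContinuousOn g (Set.Icc a b)) :
    (∫ x in a..b, (DFun a b g x - DFun a b f₁ x) ^ 2) -
        (∫ x in a..b, (DFun a b g x - DFun a b f₂ x) ^ 2) =
      -2 * ∫ x in a..b, (f₁ x - f₂ x) *
        (uFun a b g x - (uFun a b f₁ x + uFun a b f₂ x) / 2) := by
  set F₁ : ℝ → ℝ := Set.IccExtend hab.le ((Set.Icc a b).restrict f₁) with hF₁
  set F₂ : ℝ → ℝ := Set.IccExtend hab.le ((Set.Icc a b).restrict f₂) with hF₂
  set G : ℝ → ℝ := Set.IccExtend hab.le ((Set.Icc a b).restrict g) with hG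
  have cF₁ : Continuous F₁ := hf₁.restrict.comp continuous_projIcc
  have cF₂ : Continuous F₂ := hf₂.restrict.comp continuous_projIcc
  have cG : Continuous G := hg.restrict.comp continuous_projIcc
  have eF₁ : Set.EqOn f₁ F₁ (Set.Icc a b) := fun x hx => (Set.IccExtend_of_mem hab.le ((Set.Icc a b).restrict f₁) hx).symm
  have eF₂ : Set.EqOn f₂ F₂ (Set.Icc a b) := fun x hx => (Set.IccExtend_of_mem hab.le ((Set.Icc a b).restrict f₂) hx).symm
  have eG : Set.EqOn g G (Set.Icc a b) := fun x hx => (Set.IccExtend_of_mem hab.le ((Set.Icc a b).restrict g) hx).symm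
  have r1 : (∫ x in a..b, (DFun a b g x - DFun a b f₁ x) ^ 2)
      = ∫ x in a..b, (DFun a b G x - DFun a b F₁ x) ^ 2 := by
    apply intervalIntegral.integral_congr
    intro x hx
    rw [Set.uIcc_of_le hab.le] at hx
    beta_reduce
    rw [DFun_congr hab.le eG x hx, DFun_congr hab.le eF₁ x hx]
  have r2 : (∫ x in a..b, (DFun a b g x - DFun a b f₂ x) ^ 2)
      = ∫ x in a..b, (DFun a b G x - DFun a b F₂ x) ^ 2 := by
    apply intervalIntegral.integral_congr
    intro x hx
    rw [Set.uIcc_of_le hab.le] at hx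
    beta_reduce
    rw [DFun_congr hab.le eG x hx, DFun_congr hab.le eF₂ x hx]
  have r3 : (∫ x in a..b, (f₁ x - f₂ x) *
        (uFun a b g x - (uFun a b f₁ x + uFun a b f₂ x) / 2))
      = ∫ x in a..b, (F₁ x - F₂ x) *
        (uFun a b G x - (uFun a b F₁ x + uFun a b F₂ x) / 2) := by
    apply intervalIntegral.integral_congr
    intro x hx
    rw [Set.uIcc_of_le hab.le] at hx
    beta_reduce
    rw [uFun_congr hab.le eG x hx, uFun_congr hab.le eF₁ x hx, uFun_congr hab.le eF₂ x hx,
      eF₁ hx, eF₂ hx]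
  rw [r1, r2, r3]
  exact main_cont hab F₁ F₂ G cF₁ cF₂ cG
end

section
/- (Positive definiteness of the second differential of G₂.) Let a < b be real numbers and let k : ℝ → ℝ be continuous on [a,b]. Then ∫_a^b k(x) · u_k(x) dx ≥ 0, and ∫_a^b k(x) · u_k(x) dx = 0 if and only if k(x) = 0 for all x in [a,b]. -/
open intervalIntegral Filter MeasureTheory

lemma key_s9 (a b : ℝ) (hab : a < b) (K : ℝ → ℝ) (hK : Continuous K) :
    0 ≤ (∫ x in a..b, K x * uFun a b K x) ∧
      ((∫ x in a..b, K x * uFun a b K x) = 0 ↔ ∀ x ∈ Set.Icc a b, K x = 0) := by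
  have hba : b - a ≠ 0 := sub_ne_zero.2 hab.ne'
  -- primitive
  set F : ℝ → ℝ := fun y => ∫ t in a..y, K t with hFdef
  set I : ℝ := ∫ η in a..b, F η with hIdef
  set c : ℝ := (1 / (b - a)) * I with hcdef
  have hFd : ∀ x, HasDerivAt F (K x) x := fun x => (hK.integral_hasStrictDerivAt a x).hasDerivAt
  have hFc : Continuous F := by
    rw [continuous_iff_continuousAt]; exact fun x => (hFd x).continuousAt
  have huEq : uFun a b K = fun x => (∫ η in x..b, F η) - ((b - x) / (b - a)) * I := rfl
  have hDEq : DFun a b K = fun x => c - F x := by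
    funext x; simp only [DFun, hFdef, hIdef, hcdef]; ring
  -- derivative of uFun is DFun
  have hud : ∀ x, HasDerivAt (uFun a b K) (DFun a b K x) x := by
    intro x
    have h1 : HasDerivAt (fun u => ∫ η in u..b, F η) (-(F x)) x :=
      (intervalIntegral.integral_hasStrictDerivAt_left (hFc.intervalIntegrable x b)
        (hFc.stronglyMeasurableAtFilter _ _) hFc.continuousAt).hasDerivAt
    have h2 : HasDerivAt (fun x : ℝ => ((b - x) / (b - a)) * I) (-1 / (b - a) * I) x :=
      (((hasDerivAt_id x).const_sub b).div_const (b - a)).mul_const I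
    have h3 := h1.sub h2
    rw [huEq, hDEq]
    refine h3.congr_deriv ?_
    simp only [hcdef]; ring
  have huc : Continuous (uFun a b K) := by
    rw [continuous_iff_continuousAt]; exact fun x => (hud x).continuousAt
  have hDc : Continuous (DFun a b K) := by
    rw [hDEq]; exact continuous_const.sub hFc
  -- boundary values
  have hua : uFun a b K a = 0 := by
    rw [huEq]; simp only [← hIdef]; rw [div_self hba]; ring
  have hub : uFun a b K b = 0 := by
    rw [huEq]; simp
  -- ∫ DFun = 0
  have hDint : (∫ x in a..b, DFun a b K x) = 0 := by
    rw [intervalIntegral.integral_eq_sub_of_hasDerivAt (fun x _ => hud x)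
      (hDc.intervalIntegrable a b), hua, hub, sub_zero]
  -- integration by parts
  have hparts : (∫ x in a..b, (K x * uFun a b K x + F x * DFun a b K x)) = 0 := by
    rw [intervalIntegral.integral_deriv_mul_eq_sub (fun x _ => hFd x) (fun x _ => hud x)
      (hK.intervalIntegrable a b) (hDc.intervalIntegrable a b), hua, hub]
    ring
  have hint1 : IntervalIntegrable (fun x => K x * uFun a b K x) volume a b :=
    (hK.mul huc).intervalIntegrable a b
  have hint2 : IntervalIntegrable (fun x => F x * DFun a b K x) volume a b :=
    (hFc.mul hDc).intervalIntegrable a b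
  have hintD : IntervalIntegrable (fun x => DFun a b K x ^ 2) volume a b :=
    (hDc.pow 2).intervalIntegrable a b
  have hintcD : IntervalIntegrable (fun x => c * DFun a b K x) volume a b :=
    (continuous_const.mul hDc).intervalIntegrable a b
  -- main identity
  have hmain : (∫ x in a..b, K x * uFun a b K x) = ∫ x in a..b, DFun a b K x ^ 2 := by
    have hsplit := intervalIntegral.integral_add hint1 hint2
    have hFD : (∫ x in a..b, F x * DFun a b K x) = -∫ x in a..b, DFun a b K x ^ 2 := by
      have heq : (fun x => F x * DFun a b K x)
          = fun x => c * DFun a b K x - DFun a b K x ^ 2 := by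
        funext x
        have : F x = c - DFun a b K x := by rw [hDEq]; ring
        rw [this]; ring
      rw [heq, intervalIntegral.integral_sub hintcD hintD,
        intervalIntegral.integral_const_mul, hDint]
      ring
    have := hparts
    rw [hsplit, hFD] at this
    linarith
  have hnonneg : 0 ≤ ∫ x in a..b, K x * uFun a b K x := by
    rw [hmain]
    exact intervalIntegral.integral_nonneg hab.le (fun x _ => sq_nonneg _)
  refine ⟨hnonneg, ?_, ?_⟩
  · -- integral zero → K = 0 on [a,b]
    intro h0
    rw [hmain] at h0
    -- H x := ∫ a..x D² vanishes on [a,b]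
    set D : ℝ → ℝ := DFun a b K with hDdef
    set H : ℝ → ℝ := fun x => ∫ t in a..x, D t ^ 2 with hHdef
    have hD2c : Continuous (fun t => D t ^ 2) := hDc.pow 2
    have hH0 : ∀ x ∈ Set.Icc a b, H x = 0 := by
      intro x hx
      have h1 : 0 ≤ H x :=
        intervalIntegral.integral_nonneg hx.1 (fun t _ => sq_nonneg _)
      have h2 : 0 ≤ ∫ t in x..b, D t ^ 2 :=
        intervalIntegral.integral_nonneg hx.2 (fun t _ => sq_nonneg _)
      have h3 : H x + (∫ t in x..b, D t ^ 2) = 0 := by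
        rw [hHdef]
        rw [intervalIntegral.integral_add_adjacent_intervals
          (hD2c.intervalIntegrable a x) (hD2c.intervalIntegrable x b)]
        exact h0
      linarith
    -- D = 0 on Ioo a b
    have hDIoo : ∀ x ∈ Set.Ioo a b, D x = 0 := by
      intro x hx
      have hHd : HasDerivAt H (D x ^ 2) x := (hD2c.integral_hasStrictDerivAt a x).hasDerivAt
      have hev : (fun _ : ℝ => (0 : ℝ)) =ᶠ[nhds x] H := by
        filter_upwards [Ioo_mem_nhds hx.1 hx.2] with y hy
        exact (hH0 y ⟨hy.1.le, hy.2.le⟩).symm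
      have : HasDerivAt (fun _ : ℝ => (0 : ℝ)) (D x ^ 2) x := hHd.congr_of_eventuallyEq hev
      have hz : D x ^ 2 = 0 := this.unique (hasDerivAt_const x 0)
      exact sq_eq_zero_iff.mp hz
    -- hence D = 0 on Icc a b, so F = c on Icc a b
    have hDIcc : ∀ x ∈ Set.Icc a b, D x = 0 := by
      have : Set.EqOn D (fun _ => 0) (closure (Set.Ioo a b)) :=
        (Set.EqOn.closure (fun x hx => hDIoo x hx) hDc continuous_const)
      rw [closure_Ioo hab.ne] at this
      exact fun x hx => this hx
    -- K = 0 on Ioo a b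
    have hKIoo : ∀ x ∈ Set.Ioo a b, K x = 0 := by
      intro x hx
      have hFev : (fun _ : ℝ => c) =ᶠ[nhds x] F := by
        filter_upwards [Ioo_mem_nhds hx.1 hx.2] with y hy
        have h3 : D y = 0 := hDIcc y ⟨hy.1.le, hy.2.le⟩
        have h4 := congrFun hDEq y
        rw [h3] at h4
        linarith [h4]
      have : HasDerivAt (fun _ : ℝ => c) (K x) x := (hFd x).congr_of_eventuallyEq hFev
      exact (this.unique (hasDerivAt_const x c)).symm ▸ rfl
    have : Set.EqOn K (fun _ => 0) (closure (Set.Ioo a b)) :=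
      Set.EqOn.closure (fun x hx => hKIoo x hx) hK continuous_const
    rw [closure_Ioo hab.ne] at this
    exact fun x hx => this hx
  · -- K = 0 on [a,b] → integral zero
    intro hKz
    have : Set.EqOn (fun x => K x * uFun a b K x) (fun _ => 0) (Set.uIcc a b) := by
      intro x hx
      rw [Set.uIcc_of_le hab.le] at hx
      simp [hKz x hx]
    rw [intervalIntegral.integral_congr this, intervalIntegral.integral_zero]

theorem stmt_9 (a b : ℝ) (hab : a < b) (k : ℝ → ℝ)
    (hk : ContinuousOn k (Set.Icc a b)) :
    0 ≤ (∫ x in a..b, k x * uFun a b k x) ∧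
      ((∫ x in a..b, k x * uFun a b k x) = 0 ↔ ∀ x ∈ Set.Icc a b, k x = 0) := by
  set K : ℝ → ℝ := Set.IccExtend hab.le ((Set.Icc a b).restrict k) with hKdef
  have hKcont : Continuous K :=
    Continuous.Icc_extend' (continuousOn_iff_continuous_restrict.mp hk)
  have hKeq : ∀ x ∈ Set.Icc a b, K x = k x := by
    intro x hx
    rw [hKdef, Set.IccExtend_of_mem hab.le _ hx]
    rfl
  -- uFun agrees on [a,b]
  have hinner : ∀ η ∈ Set.Icc a b, (∫ ξ in a..η, k ξ) = ∫ ξ in a..η, K ξ := by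
    intro η hη
    apply intervalIntegral.integral_congr
    intro ξ hξ
    rw [Set.uIcc_of_le hη.1] at hξ
    exact (hKeq ξ ⟨hξ.1, hξ.2.trans hη.2⟩).symm
  have huEq : ∀ x ∈ Set.Icc a b, uFun a b k x = uFun a b K x := by
    intro x hx
    unfold uFun
    congr 1
    · apply intervalIntegral.integral_congr
      intro η hη
      rw [Set.uIcc_of_le hx.2] at hη
      exact hinner η ⟨hx.1.trans hη.1, hη.2⟩
    · congr 1
      apply intervalIntegral.integral_congr
      intro η hη
      rw [Set.uIcc_of_le hab.le] at hη
      exact hinner η hη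
  have hIntEq : (∫ x in a..b, k x * uFun a b k x) = ∫ x in a..b, K x * uFun a b K x := by
    apply intervalIntegral.integral_congr
    intro x hx
    rw [Set.uIcc_of_le hab.le] at hx
    show k x * uFun a b k x = K x * uFun a b K x
    rw [hKeq x hx, huEq x hx]
  obtain ⟨h1, h2⟩ := key_s9 a b hab K hKcont
  refine ⟨hIntEq ▸ h1, ?_⟩
  rw [hIntEq, h2]
  constructor
  · intro h x hx; rw [← hKeq x hx]; exact h x hx
  · intro h x hx; rw [hKeq x hx]; exact h x hx
end

section
/- (Strict convexity of G₂.) Let a < b be real numbers, let g, f₁, f₂ : ℝ → ℝ be continuous on [a,b], and suppose f₁(x₀) ≠ f₂(x₀) for some x₀ in [a,b]. Then the functional G₂(f) = ∫_a^b (D_g − D_f)² dx is strictly midpoint convex between f₁ and f₂: ∫_a^b (D_g(x) − D_{(f₁+f₂)/2}(x))² dx < (1/2) ∫_a^b (D_g(x) − D_{f₁}(x))² dx + (1/2) ∫_a^b (D_g(x) − D_{f₂}(x))² dx. -/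
open intervalIntegral Filter MeasureTheory Set Topology

section aux

variable {a b : ℝ} {f f₁ f₂ : ℝ → ℝ}

lemma aux_intInt (hab : a ≤ b) (hf : ContinuousOn f (Set.Icc a b))
    {x y : ℝ} (hx : x ∈ Set.Icc a b) (hy : y ∈ Set.Icc a b) :
    IntervalIntegrable f volume x y :=
  (hf.mono ((Set.uIcc_subset_Icc hx hy))).intervalIntegrable

lemma aux_contP (hab : a ≤ b) (hf : ContinuousOn f (Set.Icc a b)) :
    ContinuousOn (fun x => ∫ t in a..x, f t) (Set.Icc a b) := by
  have := intervalIntegral.continuousOn_primitive_interval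
    (f := f) (a := a) (b := b) (μ := volume) ?_
  · rwa [Set.uIcc_of_le hab] at this
  · rw [Set.uIcc_of_le hab]; exact hf.integrableOn_Icc

lemma aux_contD (hab : a ≤ b) (hf : ContinuousOn f (Set.Icc a b)) :
    ContinuousOn (DFun a b f) (Set.Icc a b) := by
  unfold DFun
  exact ((aux_contP hab hf).neg).add continuousOn_const

/-- Linearity of `DFun` at the midpoint. -/
lemma aux_DFun_mid (hab : a ≤ b) (hf₁ : ContinuousOn f₁ (Set.Icc a b))
    (hf₂ : ContinuousOn f₂ (Set.Icc a b)) {x : ℝ} (hx : x ∈ Set.Icc a b) :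
    DFun a b (fun t => (f₁ t + f₂ t) / 2) x = (DFun a b f₁ x + DFun a b f₂ x) / 2 := by
  have ha : a ∈ Set.Icc a b := Set.left_mem_Icc.2 hab
  have hb : b ∈ Set.Icc a b := Set.right_mem_Icc.2 hab
  have hP : ∀ y ∈ Set.Icc a b,
      (∫ ξ in a..y, (f₁ ξ + f₂ ξ) / 2) = ((∫ ξ in a..y, f₁ ξ) + ∫ ξ in a..y, f₂ ξ) / 2 := by
    intro y hy
    rw [← intervalIntegral.integral_add (aux_intInt hab hf₁ ha hy) (aux_intInt hab hf₂ ha hy),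
      ← intervalIntegral.integral_div]
  have houter : (∫ η in a..b, ∫ ξ in a..η, (f₁ ξ + f₂ ξ) / 2)
      = ((∫ η in a..b, ∫ ξ in a..η, f₁ ξ) + ∫ η in a..b, ∫ ξ in a..η, f₂ ξ) / 2 := by
    rw [show (fun η => ∫ ξ in a..η, (f₁ ξ + f₂ ξ) / 2) =
        (fun η => ∫ ξ in a..η, (f₁ ξ + f₂ ξ) / 2) from rfl]
    have h1 : (∫ η in a..b, ∫ ξ in a..η, (f₁ ξ + f₂ ξ) / 2)
        = ∫ η in a..b, ((∫ ξ in a..η, f₁ ξ) + ∫ ξ in a..η, f₂ ξ) / 2 := by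
      apply intervalIntegral.integral_congr
      intro y hy
      rw [Set.uIcc_of_le hab] at hy
      exact hP y hy
    rw [h1, intervalIntegral.integral_div, intervalIntegral.integral_add
      ((aux_contP hab hf₁).mono (by rw [Set.uIcc_of_le hab])).intervalIntegrable
      ((aux_contP hab hf₂).mono (by rw [Set.uIcc_of_le hab])).intervalIntegrable]
  unfold DFun
  rw [hP x hx, houter]
  ring

end aux

theorem stmt_10 (a b : ℝ) (hab : a < b) (g f₁ f₂ : ℝ → ℝ)
    (hg : ContinuousOn g (Set.Icc a b)) (hf₁ : ContinuousOn f₁ (Set.Icc a b))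
    (hf₂ : ContinuousOn f₂ (Set.Icc a b))
    (x₀ : ℝ) (hx₀ : x₀ ∈ Set.Icc a b) (hne : f₁ x₀ ≠ f₂ x₀) :
    (∫ x in a..b, (DFun a b g x - DFun a b (fun t => (f₁ t + f₂ t) / 2) x) ^ 2) <
      (1 / 2) * (∫ x in a..b, (DFun a b g x - DFun a b f₁ x) ^ 2) +
        (1 / 2) * ∫ x in a..b, (DFun a b g x - DFun a b f₂ x) ^ 2 := by
  have hab' : a ≤ b := hab.le
  set G := DFun a b g with hG
  set p := DFun a b f₁ with hp
  set q := DFun a b f₂ with hq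
  have hGc : ContinuousOn G (Set.Icc a b) := aux_contD hab' hg
  have hpc : ContinuousOn p (Set.Icc a b) := aux_contD hab' hf₁
  have hqc : ContinuousOn q (Set.Icc a b) := aux_contD hab' hf₂
  -- integrabilities
  have int1 : IntervalIntegrable (fun x => (G x - p x) ^ 2) volume a b := by
    apply ContinuousOn.intervalIntegrable
    rw [Set.uIcc_of_le hab']
    exact ((hGc.sub hpc).pow 2)
  have int2 : IntervalIntegrable (fun x => (G x - q x) ^ 2) volume a b := by
    apply ContinuousOn.intervalIntegrable
    rw [Set.uIcc_of_le hab']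
    exact ((hGc.sub hqc).pow 2)
  have intd : IntervalIntegrable (fun x => (p x - q x) ^ 2) volume a b := by
    apply ContinuousOn.intervalIntegrable
    rw [Set.uIcc_of_le hab']
    exact ((hpc.sub hqc).pow 2)
  -- Step 1: the midpoint integral equals the combination
  have key : (∫ x in a..b, (G x - DFun a b (fun t => (f₁ t + f₂ t) / 2) x) ^ 2)
      = ∫ x in a..b, ((1/2) * (G x - p x) ^ 2 + (1/2) * (G x - q x) ^ 2
          - (1/4) * (p x - q x) ^ 2) := by
    apply intervalIntegral.integral_congr
    intro x hx
    rw [Set.uIcc_of_le hab'] at hx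
    show (G x - DFun a b (fun t => (f₁ t + f₂ t) / 2) x) ^ 2
      = 1 / 2 * (G x - p x) ^ 2 + 1 / 2 * (G x - q x) ^ 2 - 1 / 4 * (p x - q x) ^ 2
    rw [aux_DFun_mid hab' hf₁ hf₂ hx]
    ring
  have split : (∫ x in a..b, ((1/2) * (G x - p x) ^ 2 + (1/2) * (G x - q x) ^ 2
          - (1/4) * (p x - q x) ^ 2))
      = (1/2) * (∫ x in a..b, (G x - p x) ^ 2) + (1/2) * (∫ x in a..b, (G x - q x) ^ 2)
          - (1/4) * ∫ x in a..b, (p x - q x) ^ 2 := by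
    rw [intervalIntegral.integral_sub ((int1.const_mul _).add (int2.const_mul _))
        (intd.const_mul _),
      intervalIntegral.integral_add (int1.const_mul _) (int2.const_mul _),
      intervalIntegral.integral_const_mul, intervalIntegral.integral_const_mul,
      intervalIntegral.integral_const_mul]
  rw [key, split]
  have hpos : 0 < ∫ x in a..b, (p x - q x) ^ 2 := by
    -- find a point in the open interval where f₁ ≠ f₂
    obtain ⟨x₂, hx₂, hne₂⟩ : ∃ x₂ ∈ Set.Ioo a b, f₁ x₂ ≠ f₂ x₂ := by
      have hcl : x₀ ∈ closure (Set.Ioo a b) := by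
        rw [closure_Ioo hab.ne]; exact hx₀
      have hnb : (𝓝[Set.Ioo a b] x₀).NeBot := mem_closure_iff_nhdsWithin_neBot.1 hcl
      have ht : Tendsto (fun x => f₁ x - f₂ x) (𝓝[Set.Ioo a b] x₀)
          (𝓝 (f₁ x₀ - f₂ x₀)) := by
        have := ((hf₁.sub hf₂) x₀ hx₀).tendsto
        exact this.mono_left (nhdsWithin_mono _ Set.Ioo_subset_Icc_self)
      have hev : ∀ᶠ x in 𝓝[Set.Ioo a b] x₀, f₁ x - f₂ x ≠ 0 :=
        ht.eventually_ne (sub_ne_zero.2 hne)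
      obtain ⟨x₂, hmem, hne'⟩ := (hev.and self_mem_nhdsWithin).exists
      exact ⟨x₂, hne', sub_ne_zero.1 hmem⟩
    obtain ⟨x₁, hx₁, hpq⟩ : ∃ x₁ ∈ Set.Ioo a b, p x₁ ≠ q x₁ := by
      by_contra hcon
      push_neg at hcon
      -- then P₁ - P₂ is constant on Ioo a b
      set P₁ : ℝ → ℝ := fun x => ∫ t in a..x, f₁ t
      set P₂ : ℝ → ℝ := fun x => ∫ t in a..x, f₂ t
      have hconst : ∀ x ∈ Set.Ioo a b, P₁ x - P₂ x =
          (1 / (b - a)) * (∫ η in a..b, ∫ ξ in a..η, f₁ ξ)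
            - (1 / (b - a)) * (∫ η in a..b, ∫ ξ in a..η, f₂ ξ) := by
        intro x hx
        have := hcon x hx
        simp only [hp, hq, DFun] at this
        linarith [this]
      have ha : a ∈ Set.Icc a b := Set.left_mem_Icc.2 hab'
      have hca : ContinuousAt f₁ x₂ :=
        (hf₁ x₂ (Set.Ioo_subset_Icc_self hx₂)).continuousAt (Icc_mem_nhds hx₂.1 hx₂.2)
      have hcb : ContinuousAt f₂ x₂ :=
        (hf₂ x₂ (Set.Ioo_subset_Icc_self hx₂)).continuousAt (Icc_mem_nhds hx₂.1 hx₂.2)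
      have hm₁ : StronglyMeasurableAtFilter f₁ (𝓝 x₂) volume :=
        (hf₁.mono Set.Ioo_subset_Icc_self).stronglyMeasurableAtFilter isOpen_Ioo x₂ hx₂
      have hm₂ : StronglyMeasurableAtFilter f₂ (𝓝 x₂) volume :=
        (hf₂.mono Set.Ioo_subset_Icc_self).stronglyMeasurableAtFilter isOpen_Ioo x₂ hx₂
      have hd₁ : HasDerivAt P₁ (f₁ x₂) x₂ :=
        intervalIntegral.integral_hasDerivAt_right
          (aux_intInt hab' hf₁ ha (Set.Ioo_subset_Icc_self hx₂)) hm₁ hca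
      have hd₂ : HasDerivAt P₂ (f₂ x₂) x₂ :=
        intervalIntegral.integral_hasDerivAt_right
          (aux_intInt hab' hf₂ ha (Set.Ioo_subset_Icc_self hx₂)) hm₂ hcb
      have hd : HasDerivAt (fun x => P₁ x - P₂ x) (f₁ x₂ - f₂ x₂) x₂ := hd₁.sub hd₂
      have hdc : HasDerivAt (fun x => P₁ x - P₂ x) 0 x₂ := by
        have heq : (fun x => P₁ x - P₂ x) =ᶠ[𝓝 x₂]
            (fun _ => (1 / (b - a)) * (∫ η in a..b, ∫ ξ in a..η, f₁ ξ)
              - (1 / (b - a)) * (∫ η in a..b, ∫ ξ in a..η, f₂ ξ)) := by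
          filter_upwards [isOpen_Ioo.mem_nhds hx₂] with x hx using hconst x hx
        exact (hasDerivAt_const x₂ _).congr_of_eventuallyEq heq
      exact hne₂ (sub_eq_zero.1 (hd.unique hdc))
    -- positivity via support
    have hFc : ContinuousAt (fun x => p x - q x) x₁ :=
      ((hpc.sub hqc) x₁ (Set.Ioo_subset_Icc_self hx₁)).continuousAt
        (Icc_mem_nhds hx₁.1 hx₁.2)
    have hnbhd : {x | p x - q x ≠ 0} ∩ Set.Ioo a b ∈ 𝓝 x₁ := by
      refine Filter.inter_mem ?_ (isOpen_Ioo.mem_nhds hx₁)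
      exact hFc.preimage_mem_nhds (isOpen_ne.mem_nhds (sub_ne_zero.2 hpq))
    obtain ⟨c, d, hcd, hsub⟩ := mem_nhds_iff_exists_Ioo_subset.1 hnbhd
    rw [intervalIntegral.integral_pos_iff_support_of_nonneg_ae
      (Filter.Eventually.of_forall fun x => sq_nonneg _) intd]
    refine ⟨hab, ?_⟩
    have hsupp : Set.Ioo c d ⊆ Function.support (fun x => (p x - q x) ^ 2) ∩ Set.Ioc a b := by
      intro x hx
      obtain ⟨hne', hIoo⟩ := hsub hx
      exact ⟨pow_ne_zero _ (sub_ne_zero.2 (fun h => hne' (by simpa [h] using sub_eq_zero.2 h))),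
        Set.Ioo_subset_Ioc_self hIoo⟩
    calc (0 : ENNReal) < volume (Set.Ioo c d) := by
          rw [Real.volume_Ioo]; exact ENNReal.ofReal_pos.2 (by linarith [hcd.1, hcd.2])
      _ ≤ _ := measure_mono hsupp
  linarith
end

section
/- (Theorem 3.3, part 3: second Gâteaux derivative of G.) Let a < b be real numbers and let f, h, k, g : ℝ → ℝ be continuous on [a,b]. Define G'(f)[k] = −2 ∫_a^b k(x) · [ (g(x) − f(x)) + (u_g(x) − u_f(x)) ] dx. Then the limit as ε → 0 (ε ≠ 0) of (G'(f + εh)[k] − G'(f)[k])/ε exists and equals 2 ∫_a^b k(x) · ( h(x) + u_h(x) ) dx, i.e., G''(f)[h,k] = 2⟨h − Δ^{-1}h, k⟩_{L²}. Moreover this quadratic form is positive definite: 2 ∫_a^b k(x)(k(x) + u_k(x)) dx ≥ 0 with equality iff k = 0 on [a,b]. -/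
open intervalIntegral Filter

open MeasureTheory Set

-- auxiliary lemmas
lemma aux_ii {a b c d : ℝ} {f : ℝ → ℝ} (hf : ContinuousOn f (Icc a b))
    (hc : c ∈ Icc a b) (hd : d ∈ Icc a b) : IntervalIntegrable f volume c d := by
  apply ContinuousOn.intervalIntegrable
  apply hf.mono
  exact uIcc_subset_Icc hc hd

lemma aux_Fcont {a b : ℝ} (hab : a ≤ b) {f : ℝ → ℝ} (hf : ContinuousOn f (Icc a b)) :
    ContinuousOn (fun η => ∫ ξ in a..η, f ξ) (Icc a b) := by
  have : IntegrableOn f (uIcc a b) := by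
    rw [uIcc_of_le hab]; exact hf.integrableOn_Icc
  simpa [uIcc_of_le hab] using continuousOn_primitive_interval this

lemma aux_ucont {a b : ℝ} (hab : a ≤ b) {f : ℝ → ℝ} (hf : ContinuousOn f (Icc a b)) :
    ContinuousOn (uFun a b f) (Icc a b) := by
  have hF : IntegrableOn (fun η => ∫ ξ in a..η, f ξ) (uIcc a b) := by
    rw [uIcc_of_le hab]; exact (aux_Fcont hab hf).integrableOn_Icc
  have h1 := continuousOn_primitive_interval_left (a := a) (b := b) (μ := volume) hF
  rw [uIcc_of_le hab] at h1
  exact h1.sub ((Continuous.continuousOn (by continuity)).mul continuousOn_const)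

lemma aux_lin {a b : ℝ} (hab : a ≤ b) {f h : ℝ → ℝ} (hf : ContinuousOn f (Icc a b))
    (hh : ContinuousOn h (Icc a b)) (ε : ℝ) {x : ℝ} (hx : x ∈ Icc a b) :
    uFun a b (fun t => f t + ε * h t) x = uFun a b f x + ε * uFun a b h x := by
  have hmem : ∀ {c d : ℝ}, c ∈ Icc a b → d ∈ Icc a b →
      (∫ ξ in c..d, (f ξ + ε * h ξ)) = (∫ ξ in c..d, f ξ) + ε * ∫ ξ in c..d, h ξ := by
    intro c d hc hd
    rw [integral_add (aux_ii hf hc hd) ((aux_ii hh hc hd).const_mul ε),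
      intervalIntegral.integral_const_mul]
  have ha : a ∈ Icc a b := left_mem_Icc.2 hab
  have hb : b ∈ Icc a b := right_mem_Icc.2 hab
  have key : ∀ {c d : ℝ}, c ∈ Icc a b → d ∈ Icc a b →
      (∫ η in c..d, ∫ ξ in a..η, (f ξ + ε * h ξ)) =
      (∫ η in c..d, ∫ ξ in a..η, f ξ) + ε * ∫ η in c..d, ∫ ξ in a..η, h ξ := by
    intro c d hc hd
    have hsub : uIcc c d ⊆ Icc a b := uIcc_subset_Icc hc hd
    have e1 : EqOn (fun η => ∫ ξ in a..η, (f ξ + ε * h ξ))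
        (fun η => (∫ ξ in a..η, f ξ) + ε * ∫ ξ in a..η, h ξ) (uIcc c d) := by
      intro η hη
      exact hmem ha (hsub hη)
    rw [integral_congr e1,
      integral_add (((aux_Fcont hab hf).mono hsub).intervalIntegrable)
        ((((aux_Fcont hab hh).mono hsub).intervalIntegrable).const_mul ε),
      intervalIntegral.integral_const_mul]
  simp only [uFun, key hx hb, key ha hb]
  ring

lemma aux_Dcont {a b : ℝ} (hab : a ≤ b) {k : ℝ → ℝ} (hk : ContinuousOn k (Icc a b)) :
    ContinuousOn (DFun a b k) (Icc a b) :=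
  ((aux_Fcont hab hk).neg).add continuousOn_const

lemma aux_hasDerivU {a b : ℝ} (hab : a < b) {k : ℝ → ℝ} (hk : ContinuousOn k (Icc a b))
    {x : ℝ} (hx : x ∈ Ioo a b) : HasDerivAt (uFun a b k) (DFun a b k x) x := by
  set F : ℝ → ℝ := fun η => ∫ ξ in a..η, k ξ with hF
  have hFc : ContinuousOn F (Icc a b) := aux_Fcont hab.le hk
  have hxI : x ∈ Icc a b := Ioo_subset_Icc_self hx
  have h1 : HasDerivAt (fun y => ∫ η in y..b, F η) (-F x) x := by
    apply integral_hasDerivAt_left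
    · exact (hFc.mono (uIcc_subset_Icc hxI (right_mem_Icc.2 hab.le))).intervalIntegrable
    · exact (hFc.mono Ioo_subset_Icc_self).stronglyMeasurableAtFilter isOpen_Ioo x hx
    · exact (hFc.mono Ioo_subset_Icc_self).continuousAt (isOpen_Ioo.mem_nhds hx)
  have h2 : HasDerivAt (fun y => ((b - y) / (b - a)) * ∫ η in a..b, F η)
      (-(1 / (b - a)) * ∫ η in a..b, F η) x := by
    have : HasDerivAt (fun y => (b - y) / (b - a)) (-(1 / (b - a))) x := by
      have := ((hasDerivAt_id x).const_sub b).div_const (b - a)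
      simpa [neg_div, one_div] using this
    simpa using this.mul_const _
  have := h1.sub h2
  refine this.congr_deriv ?_
  simp only [DFun, hF]
  ring

lemma aux_hasDerivD {a b : ℝ} (hab : a < b) {k : ℝ → ℝ} (hk : ContinuousOn k (Icc a b))
    {x : ℝ} (hx : x ∈ Ioo a b) : HasDerivAt (DFun a b k) (-(k x)) x := by
  have hxI : x ∈ Icc a b := Ioo_subset_Icc_self hx
  have h1 : HasDerivAt (fun y => ∫ ξ in a..y, k ξ) (k x) x := by
    apply integral_hasDerivAt_right
    · exact aux_ii hk (left_mem_Icc.2 hab.le) hxI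
    · exact (hk.mono Ioo_subset_Icc_self).stronglyMeasurableAtFilter isOpen_Ioo x hx
    · exact (hk.mono Ioo_subset_Icc_self).continuousAt (isOpen_Ioo.mem_nhds hx)
  have := (h1.neg).add_const ((1 / (b - a)) * ∫ η in a..b, ∫ ξ in a..η, k ξ)
  exact this

lemma aux_parts {a b : ℝ} (hab : a < b) {k : ℝ → ℝ} (hk : ContinuousOn k (Icc a b)) :
    (∫ x in a..b, k x * uFun a b k x) = ∫ x in a..b, DFun a b k x * DFun a b k x := by
  set u := uFun a b k
  set D := DFun a b k
  have hne : b - a ≠ 0 := sub_ne_zero.2 hab.ne'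
  have huc : ContinuousOn u (Icc a b) := aux_ucont hab.le hk
  have hDc : ContinuousOn D (Icc a b) := aux_Dcont hab.le hk
  have hftc : (∫ x in a..b, (D x * D x + u x * (-(k x)))) = u b * D b - u a * D a := by
    apply integral_eq_sub_of_hasDeriv_right_of_le hab.le
    · exact huc.mul hDc
    · intro x hx
      exact (((aux_hasDerivU hab hk hx).mul (aux_hasDerivD hab hk hx))).hasDerivWithinAt
    · apply ContinuousOn.intervalIntegrable
      rw [uIcc_of_le hab.le]
      exact (hDc.mul hDc).add (huc.mul hk.neg)
  have hua : u a = 0 := by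
    simp [u, uFun, div_self hne]
  have hub : u b = 0 := by
    simp [u, uFun]
  rw [hua, hub] at hftc
  have hsplit : (∫ x in a..b, (D x * D x + u x * (-(k x)))) =
      (∫ x in a..b, D x * D x) + ∫ x in a..b, u x * (-(k x)) := by
    apply intervalIntegral.integral_add
    · apply ContinuousOn.intervalIntegrable; rw [uIcc_of_le hab.le]; exact hDc.mul hDc
    · apply ContinuousOn.intervalIntegrable; rw [uIcc_of_le hab.le]; exact huc.mul hk.neg
  have h3 : (∫ x in a..b, u x * (-(k x))) = -∫ x in a..b, k x * u x := by
    rw [← intervalIntegral.integral_neg]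
    congr 1; ext x; ring
  rw [hsplit, h3] at hftc
  linarith

theorem stmt_14 (a b : ℝ) (hab : a < b) (f h k g : ℝ → ℝ)
    (hf : ContinuousOn f (Set.Icc a b)) (hh : ContinuousOn h (Set.Icc a b))
    (hk : ContinuousOn k (Set.Icc a b)) (hg : ContinuousOn g (Set.Icc a b))
    (G' : (ℝ → ℝ) → (ℝ → ℝ) → ℝ)
    (hG' : ∀ f k : ℝ → ℝ, G' f k = -2 * ∫ x in a..b,
      k x * ((g x - f x) + (uFun a b g x - uFun a b f x))) :
    (Tendsto (fun ε : ℝ => (G' (fun t => f t + ε * h t) k - G' f k) / ε)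
      (nhdsWithin 0 {0}ᶜ)
      (nhds (2 * ∫ x in a..b, k x * (h x + uFun a b h x)))) ∧
    (0 ≤ 2 * ∫ x in a..b, k x * (k x + uFun a b k x)) ∧
    ((2 * ∫ x in a..b, k x * (k x + uFun a b k x)) = 0 ↔
      ∀ x ∈ Set.Icc a b, k x = 0) := by
  have hsub : Set.uIcc a b ⊆ Set.Icc a b := by rw [Set.uIcc_of_le hab.le]
  have huf := aux_ucont hab.le hf
  have hug := aux_ucont hab.le hg
  have huh := aux_ucont hab.le hh
  have huk := aux_ucont hab.le hk
  set B : ℝ := ∫ x in a..b, k x * (h x + uFun a b h x) with hB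
  have hBc : ContinuousOn (fun x => k x * (h x + uFun a b h x)) (Set.Icc a b) :=
    hk.mul (hh.add huh)
  have hAc : ContinuousOn
      (fun x => k x * ((g x - f x) + (uFun a b g x - uFun a b f x))) (Set.Icc a b) :=
    hk.mul ((hg.sub hf).add (hug.sub huf))
  constructor
  · -- part 1
    have hquot : ∀ ε : ℝ, ε ≠ 0 →
        (G' (fun t => f t + ε * h t) k - G' f k) / ε = 2 * B := by
      intro ε hε
      have hint : (∫ x in a..b, k x * ((g x - (f x + ε * h x)) +
          (uFun a b g x - uFun a b (fun t => f t + ε * h t) x))) =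
          (∫ x in a..b, k x * ((g x - f x) + (uFun a b g x - uFun a b f x))) - ε * B := by
        have e1 : Set.EqOn
            (fun x => k x * ((g x - (f x + ε * h x)) +
              (uFun a b g x - uFun a b (fun t => f t + ε * h t) x)))
            (fun x => k x * ((g x - f x) + (uFun a b g x - uFun a b f x))
              - ε * (k x * (h x + uFun a b h x))) (Set.uIcc a b) := by
          intro x hx
          simp only
          rw [aux_lin hab.le hf hh ε (hsub hx)]
          ring
        rw [intervalIntegral.integral_congr e1,
          intervalIntegral.integral_sub
            ((hAc.mono hsub).intervalIntegrable)
            (((hBc.mono hsub).intervalIntegrable).const_mul ε),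
          intervalIntegral.integral_const_mul]
      rw [hG', hG', hint]
      field_simp
      ring
    refine Tendsto.congr' ?_ (tendsto_const_nhds (x := 2 * B))
    filter_upwards [self_mem_nhdsWithin] with ε hε
    exact (hquot ε hε).symm
  · -- parts 2 and 3
    set I1 : ℝ := ∫ x in a..b, k x * k x with hI1
    set I2 : ℝ := ∫ x in a..b, DFun a b k x * DFun a b k x with hI2
    have hsplit : (∫ x in a..b, k x * (k x + uFun a b k x)) = I1 + I2 := by
      have e1 : Set.EqOn (fun x => k x * (k x + uFun a b k x))
          (fun x => k x * k x + k x * uFun a b k x) (Set.uIcc a b) := by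
        intro x hx; simp only; ring
      rw [intervalIntegral.integral_congr e1,
        intervalIntegral.integral_add (f := fun x => k x * k x) (g := fun x => k x * uFun a b k x)
          (((hk.mul hk).mono hsub).intervalIntegrable)
          (((hk.mul huk).mono hsub).intervalIntegrable),
        aux_parts hab hk]
    have hI1nn : 0 ≤ I1 :=
      intervalIntegral.integral_nonneg hab.le (fun x _ => mul_self_nonneg _)
    have hI2nn : 0 ≤ I2 :=
      intervalIntegral.integral_nonneg hab.le (fun x _ => mul_self_nonneg _)
    refine ⟨by rw [hsplit]; linarith, ?_, ?_⟩
    · -- forward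
      intro heq x0 hx0
      rw [hsplit] at heq
      have hI1z : I1 = 0 := by linarith
      by_contra hkx0
      -- find a positive-measure subinterval where k ≠ 0
      have hcw : ContinuousWithinAt k (Set.Icc a b) x0 := hk x0 hx0
      have hev : ∀ᶠ y in nhdsWithin x0 (Set.Icc a b), k y ≠ 0 :=
        hcw.eventually_ne hkx0
      rw [eventually_nhdsWithin_iff] at hev
      rw [Metric.eventually_nhds_iff] at hev
      obtain ⟨δ, hδ, hδk⟩ := hev
      set c : ℝ := max a (x0 - δ)
      set d : ℝ := min b (x0 + δ)
      have hcd : c < d := by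
        apply max_lt <;> apply lt_min
        · exact hab
        · linarith [hx0.1]
        · linarith [hx0.2]
        · linarith
      have hsupp : Set.Ioo c d ⊆
          Function.support (fun x => k x * k x) ∩ Set.Ioc a b := by
        intro y hy
        have hy1 : a < y := lt_of_le_of_lt (le_max_left _ _) hy.1
        have hy2 : y < b := lt_of_lt_of_le hy.2 (min_le_left _ _)
        have hyI : y ∈ Set.Icc a b := ⟨hy1.le, hy2.le⟩
        have hdist : dist y x0 < δ := by
          rw [Real.dist_eq, abs_lt]
          constructor
          · have := lt_of_le_of_lt (le_max_right a (x0 - δ)) hy.1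
            linarith
          · have := lt_of_lt_of_le hy.2 (min_le_right b (x0 + δ))
            linarith
        have hky : k y ≠ 0 := hδk hdist hyI
        exact ⟨by simp [Function.mem_support, mul_self_eq_zero, hky],
          ⟨hy1, hy2.le⟩⟩
      have hpos : 0 < I1 := by
        rw [hI1]
        refine (intervalIntegral.integral_pos_iff_support_of_nonneg_ae'
          (Filter.Eventually.of_forall (fun x => mul_self_nonneg _))
          (((hk.mul hk).mono hsub).intervalIntegrable)).2 ⟨hab, ?_⟩
        calc (0 : ENNReal) < MeasureTheory.volume (Set.Ioo c d) := by
              simp [Real.volume_Ioo, hcd]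
          _ ≤ _ := MeasureTheory.measure_mono hsupp
      linarith
    · -- backward
      intro hz
      have e0 : Set.EqOn (fun x => k x * (k x + uFun a b k x)) (fun _ => (0:ℝ))
          (Set.uIcc a b) := by
        intro x hx
        simp [hz x (hsub hx)]
      rw [intervalIntegral.integral_congr e0]
      simp
end

section
/- (Weak convergence of the data sequence in Theorem 5.1.) Let a < b be real numbers, let g : ℝ → ℝ be continuous on [a,b], and let (f_m) be a sequence of functions continuous on [a,b] such that ∫_a^b (D_{f_m}(x) − D_g(x))² dx → 0 as m → ∞. Then for every function φ : ℝ → ℝ that is twice continuously differentiable on [a,b] with φ(a) = 0 and φ(b) = 0, one has ∫_a^b (f_m(x) − g(x)) · φ(x) dx → 0 as m → ∞. -/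
open intervalIntegral Filter

/-- Cauchy–Schwarz for interval integrals of continuous functions. -/
lemma cs_aux (a b : ℝ) (hab : a ≤ b) (h k : ℝ → ℝ)
    (hh : ContinuousOn h (Set.Icc a b)) (hk : ContinuousOn k (Set.Icc a b)) :
    (∫ x in a..b, h x * k x) ^ 2 ≤
      (∫ x in a..b, h x ^ 2) * (∫ x in a..b, k x ^ 2) := by
  have huIcc : Set.uIcc a b = Set.Icc a b := Set.uIcc_of_le hab
  have ih2 : IntervalIntegrable (fun x => h x ^ 2) MeasureTheory.volume a b :=
    ContinuousOn.intervalIntegrable (by rw [huIcc]; exact hh.pow 2)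
  have ik2 : IntervalIntegrable (fun x => k x ^ 2) MeasureTheory.volume a b :=
    ContinuousOn.intervalIntegrable (by rw [huIcc]; exact hk.pow 2)
  have ihk : IntervalIntegrable (fun x => h x * k x) MeasureTheory.volume a b :=
    ContinuousOn.intervalIntegrable (by rw [huIcc]; exact hh.mul hk)
  set A := ∫ x in a..b, h x ^ 2 with hA
  set B := ∫ x in a..b, h x * k x with hB
  set C := ∫ x in a..b, k x ^ 2 with hC
  have key : ∀ t : ℝ, 0 ≤ A * (t * t) + (2 * B) * t + C := by
    intro t
    have expand : A * (t * t) + (2 * B) * t + C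
        = ∫ x in a..b, (t * h x + k x) ^ 2 := by
      have heq : (fun x => (t * h x + k x) ^ 2)
          = fun x => (t * t) * (h x ^ 2) + ((2 * t) * (h x * k x) + k x ^ 2) := by
        funext x; ring
      rw [heq, integral_add (ih2.const_mul _) ((ihk.const_mul _).add ik2),
        integral_add (ihk.const_mul _) ik2,
        integral_const_mul, integral_const_mul]
      ring
    rw [expand]
    exact intervalIntegral.integral_nonneg hab (fun x _ => sq_nonneg _)
  have hd := discrim_le_zero key
  rw [discrim] at hd
  nlinarith [hd]

theorem stmt_18 (a b : ℝ) (hab : a < b) (g : ℝ → ℝ)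
    (hg : ContinuousOn g (Set.Icc a b))
    (f : ℕ → ℝ → ℝ) (hf : ∀ m, ContinuousOn (f m) (Set.Icc a b))
    (hD : Tendsto (fun m => ∫ x in a..b, (DFun a b (f m) x - DFun a b g x) ^ 2)
      atTop (nhds 0)) :
    ∀ (φ φ' φ'' : ℝ → ℝ),
      ContinuousOn φ (Set.Icc a b) →
      (∀ x ∈ Set.Icc a b, HasDerivWithinAt φ (φ' x) (Set.Icc a b) x) →
      ContinuousOn φ' (Set.Icc a b) →
      (∀ x ∈ Set.Icc a b, HasDerivWithinAt φ' (φ'' x) (Set.Icc a b) x) →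
      ContinuousOn φ'' (Set.Icc a b) →
      φ a = 0 → φ b = 0 →
      Tendsto (fun m => ∫ x in a..b, (f m x - g x) * φ x) atTop (nhds 0) := by
  intro φ φ' φ'' hφ hφd hφ' hφ'd hφ'' ha0 hb0
  have hab' : a ≤ b := hab.le
  have huIcc : Set.uIcc a b = Set.Icc a b := Set.uIcc_of_le hab'
  -- interval integrability of functions continuous on `Icc a b`
  have II : ∀ u : ℝ → ℝ, ContinuousOn u (Set.Icc a b) →
      IntervalIntegrable u MeasureTheory.volume a b := fun u hu =>
    ContinuousOn.intervalIntegrable (by rw [huIcc]; exact hu)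
  -- integrability on subintervals a..x for x ∈ Icc a b
  have IIx : ∀ u : ℝ → ℝ, ContinuousOn u (Set.Icc a b) → ∀ x ∈ Set.Icc a b,
      IntervalIntegrable u MeasureTheory.volume a x := by
    intro u hu x hx
    refine ContinuousOn.intervalIntegrable (hu.mono ?_)
    rw [Set.uIcc_of_le hx.1]
    exact Set.Icc_subset_Icc le_rfl hx.2
  -- continuity of primitives
  have primCont : ∀ u : ℝ → ℝ, ContinuousOn u (Set.Icc a b) →
      ContinuousOn (fun x => ∫ t in a..x, u t) (Set.Icc a b) := by
    intro u hu
    have := intervalIntegral.continuousOn_primitive_interval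
      (f := u) (μ := MeasureTheory.volume) (a := a) (b := b)
      (by rw [huIcc]; exact hu.integrableOn_compact isCompact_Icc)
    rwa [huIcc] at this
  -- derivative of primitives at interior points
  have primDeriv : ∀ u : ℝ → ℝ, ContinuousOn u (Set.Icc a b) → ∀ x ∈ Set.Ioo a b,
      HasDerivAt (fun y => ∫ t in a..y, u t) (u x) x := by
    intro u hu x hx
    have hmem : Set.Icc a b ∈ nhds x := Icc_mem_nhds hx.1 hx.2
    have hcx : ∀ y ∈ Set.Ioo a b, ContinuousAt u y := fun y hy =>
      hu.continuousAt (Icc_mem_nhds hy.1 hy.2)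
    have hmeas := ContinuousAt.stronglyMeasurableAtFilter
      (μ := MeasureTheory.volume) isOpen_Ioo hcx x hx
    exact intervalIntegral.integral_hasDerivAt_right
      (IIx u hu x ⟨hx.1.le, hx.2.le⟩) hmeas (hcx x hx)
  -- derivative of φ at interior points
  have hφDeriv : ∀ x ∈ Set.Ioo a b, HasDerivAt φ (φ' x) x := fun x hx =>
    (hφd x ⟨hx.1.le, hx.2.le⟩).hasDerivAt (Icc_mem_nhds hx.1 hx.2)
  -- ∫ φ' = 0
  have intφ' : (∫ x in a..b, φ' x) = 0 := by
    rw [intervalIntegral.integral_eq_sub_of_hasDeriv_right_of_le hab' hφ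
      (fun x hx => (hφDeriv x hx).hasDerivWithinAt) (II φ' hφ'), ha0, hb0, sub_zero]
  -- continuity of DFun differences
  have hDcont : ∀ m, ContinuousOn
      (fun x => DFun a b (f m) x - DFun a b g x) (Set.Icc a b) := by
    intro m
    unfold DFun
    exact (((primCont _ (hf m)).neg.add continuousOn_const).sub
      ((primCont _ hg).neg.add continuousOn_const))
  -- key identity: integration by parts
  have key : ∀ m, (∫ x in a..b, (f m x - g x) * φ x)
      = ∫ x in a..b, (DFun a b (f m) x - DFun a b g x) * φ' x := by
    intro m
    set h : ℝ → ℝ := fun x => f m x - g x with hhdef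
    have hh : ContinuousOn h (Set.Icc a b) := (hf m).sub hg
    set F : ℝ → ℝ := fun x => ∫ t in a..x, h t with hFdef
    have hFcont : ContinuousOn F (Set.Icc a b) := primCont h hh
    -- integration by parts: ∫ (hφ + Fφ') = F b φ b - F a φ a = 0
    have ibp : (∫ x in a..b, (h x * φ x + F x * φ' x)) = 0 := by
      rw [intervalIntegral.integral_eq_sub_of_hasDeriv_right_of_le hab'
        (hFcont.mul hφ)
        (fun x hx => (((primDeriv h hh x hx).mul (hφDeriv x hx)).hasDerivWithinAt))
        (II _ ((hh.mul hφ).add (hFcont.mul hφ')))]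
      simp [hFdef, hb0, intervalIntegral.integral_same]
    have isplit : (∫ x in a..b, h x * φ x) + (∫ x in a..b, F x * φ' x) = 0 := by
      rw [← intervalIntegral.integral_add (f := fun x => h x * φ x) (g := fun x => F x * φ' x) (II _ (hh.mul hφ)) (II _ (hFcont.mul hφ'))]
      exact ibp
    -- the constant difference
    set c : ℝ := ((1 : ℝ) / (b - a)) * (∫ η in a..b, ∫ ξ in a..η, f m ξ)
      - ((1 : ℝ) / (b - a)) * (∫ η in a..b, ∫ ξ in a..η, g ξ) with hcdef
    have hEq : Set.EqOn (fun x => (DFun a b (f m) x - DFun a b g x) * φ' x)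
        (fun x => (-F x + c) * φ' x) (Set.uIcc a b) := by
      intro x hx
      rw [huIcc] at hx
      have : (∫ t in a..x, h t) = (∫ t in a..x, f m t) - ∫ t in a..x, g t :=
        intervalIntegral.integral_sub (IIx _ (hf m) x hx) (IIx _ hg x hx)
      simp only [DFun, hFdef, hcdef, this]
      ring
    rw [intervalIntegral.integral_congr hEq]
    have expand : (fun x => (-F x + c) * φ' x)
        = fun x => (-1 : ℝ) * (F x * φ' x) + c * φ' x := by funext x; ring
    rw [expand, intervalIntegral.integral_add (f := fun x => (-1 : ℝ) * (F x * φ' x)) (g := fun x => c * φ' x)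
        ((II _ (hFcont.mul hφ')).const_mul (-1 : ℝ)) ((II φ' hφ').const_mul c),
      intervalIntegral.integral_const_mul, intervalIntegral.integral_const_mul, intφ',
      mul_zero, add_zero]
    linarith [isplit]
  -- Cauchy–Schwarz bound and squeeze
  set K := ∫ x in a..b, φ' x ^ 2 with hK
  have hbound : ∀ m, ‖∫ x in a..b, (f m x - g x) * φ x‖
      ≤ Real.sqrt ((∫ x in a..b, (DFun a b (f m) x - DFun a b g x) ^ 2) * K) := by
    intro m
    rw [key m, Real.norm_eq_abs, ← Real.sqrt_sq_eq_abs]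
    exact Real.sqrt_le_sqrt (cs_aux a b hab' _ φ' (hDcont m) hφ')
  have hlim : Tendsto (fun m => Real.sqrt
      ((∫ x in a..b, (DFun a b (f m) x - DFun a b g x) ^ 2) * K)) atTop (nhds 0) := by
    have h1 : Tendsto (fun m =>
        (∫ x in a..b, (DFun a b (f m) x - DFun a b g x) ^ 2) * K) atTop (nhds 0) := by
      simpa using hD.mul_const K
    have h2 := (Real.continuous_sqrt.tendsto 0).comp h1
    simpa [Function.comp_def] using h2
  exact squeeze_zero_norm hbound hlim
end
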